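/- arXiv:2306.11820 — 8 statements merged into one kernel-verified Lean document; each statement's English description precedes it below -/
import Mathlib

section
/- Let C = {c_1,…,c_m} be candidate locations, E = {e_1,…,e_n} expert locations in a normed vector space, and ≻^k an inducible top-k ranking profile. Then for any two candidates g ≠ h, the supremum of q̂_h − q̂_g over all q̂ ∈ ℝ^m consistent with ≻^k equals d_G(g, h), the shortest directed path distance from g to h in the weighted graph G(C, E, ≻^k); in particular the supremum is +∞ exactly when there is no directed g → h path. -/
open scoped Classical

section VotingDefs

variable {V : Type*} [NormedAddCommGroup V] [NormedSpace ℝ V]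

/-- An expert with top-`k` ranking `pref : Fin k → Fin m` prefers candidate `j` to `j'`:
`j` is ranked at some position `h`, and `j'` is either unranked or ranked strictly later. -/
def Prefers {k m : ℕ} (pref : Fin k → Fin m) (j j' : Fin m) : Prop :=
  ∃ h : Fin k, pref h = j ∧
    ((∀ h' : Fin k, pref h' ≠ j') ∨ ∃ h' : Fin k, pref h' = j' ∧ h < h')

/-- `q` is consistent with the profile `pref` of top-`k` rankings, given candidate
locations `c` and expert locations `e`. -/
def Consistent {n k m : ℕ} (c : Fin m → V) (e : Fin n → V)
    (pref : Fin n → Fin k → Fin m) (q : Fin m → ℝ) : Prop :=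
  ∀ (i : Fin n) (j j' : Fin m), Prefers (pref i) j j' →
    q j' - ‖e i - c j'‖ ≤ q j - ‖e i - c j‖

/-- Edge relation of the graph `G(C, E, ≻^k)`. -/
def HasEdge {n k m : ℕ} (pref : Fin n → Fin k → Fin m) (j j' : Fin m) : Prop :=
  ∃ i : Fin n, Prefers (pref i) j j'

/-- Weight of the edge `j → j'` in `G(C, E, ≻^k)`: the minimum of
`‖e i - c j'‖ - ‖e i - c j‖` over experts `i` preferring `j` to `j'`. -/
noncomputable def weightG {n k m : ℕ} (c : Fin m → V) (e : Fin n → V)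
    (pref : Fin n → Fin k → Fin m) (j j' : Fin m) : ℝ :=
  sInf {x : ℝ | ∃ i : Fin n, Prefers (pref i) j j' ∧ x = ‖e i - c j'‖ - ‖e i - c j‖}

/-- A directed walk along `edge` from `g` to `h`, recorded as its list of vertices. -/
def IsWalk {α : Type*} (edge : α → α → Prop) (l : List α) (g h : α) : Prop :=
  l.Chain' edge ∧ l.head? = some g ∧ l.getLast? = some h

/-- Total weight of a walk (sum of the weights of consecutive pairs). -/
noncomputable def walkWeight {α : Type*} (w : α → α → ℝ) (l : List α) : ℝ :=
  ((l.zip l.tail).map fun p => w p.1 p.2).sum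

/-- Shortest directed path distance; `+∞` if there is no directed path. -/
noncomputable def distG {α : Type*} (edge : α → α → Prop) (w : α → α → ℝ) (g h : α) : EReal :=
  sInf {x : EReal | ∃ l : List α, IsWalk edge l g h ∧ x = ((walkWeight w l : ℝ) : EReal)}

/-- Distance (number of edges) in an unweighted directed graph; `⊤` if unreachable. -/
noncomputable def hopDist {α : Type*} (edge : α → α → Prop) (g h : α) : ℕ∞ :=
  sInf {x : ℕ∞ | ∃ l : List α, IsWalk edge l g h ∧ x = ((l.length - 1 : ℕ) : ℕ∞)}

/-- `diam(G, S)`: the longest shortest-path length between two vertices of `S`. -/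
noncomputable def diamS {α : Type*} (edge : α → α → Prop) (S : Set α) : ℕ∞ :=
  ⨆ (u : α) (_ : u ∈ S) (v : α) (_ : v ∈ S), hopDist edge u v

/-- Edge relation of the unweighted graph `G(C, E, ≻^k)[δ]`. -/
def EdgeDelta {n k m : ℕ} (e : Fin n → V) (pref : Fin n → Fin k → Fin m) (δ : ℝ)
    (j j' : Fin m) : Prop :=
  ∃ i i' : Fin n, Prefers (pref i) j j' ∧ Prefers (pref i') j' j ∧ ‖e i - e i'‖ ≤ δ

/-- Minimum cardinality of an internal `δ`-cover of `Θ`; `⊤` if no finite cover exists. -/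
noncomputable def coverNum (Θ : Set V) (δ : ℝ) : ℕ∞ :=
  sInf {x : ℕ∞ | ∃ X : Finset V, ↑X ⊆ Θ ∧ (∀ θ ∈ Θ, ∃ v ∈ X, ‖θ - v‖ ≤ δ) ∧ x = (X.card : ℕ∞)}

end VotingDefs

/-!
A vector `q` is consistent exactly when it is a feasible potential for the edge weights of
`G(C, E, ≻^k)`, i.e. `q j' - q j ≤ w(j, j')` on every edge. Summing along a walk bounds `q h - q g`
by the weight of every `g → h` walk. Conversely, starting from one feasible `q₀` and a slack
`T ≥ 0`, give every vertex `j` an extra edge `j → h` of weight `q₀ h - q₀ j + T`. The distances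
`δ_T` to `h` in the augmented graph are finite (bounded below by `q₀ h - q₀ j`), the triangle
inequality makes `q₀ h - δ_T` feasible, and `δ_T h = 0`, so this potential realises
`q h - q g = δ_T g = min(q₀ h - q₀ g + T, d_G(g, h))`, which tends to `d_G(g, h)` as `T → ∞`.
-/

section Potentials

variable {α : Type*} {edge : α → α → Prop} {w : α → α → ℝ}

def IsFeasiblePotential (edge : α → α → Prop) (w : α → α → ℝ) (q : α → ℝ) : Prop :=
  ∀ ⦃j j' : α⦄, edge j j' → q j' - q j ≤ w j j'

lemma isWalk_iff {l : List α} {a b : α} :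
    IsWalk edge l a b ↔ l.IsChain edge ∧ l.head? = some a ∧ l.getLast? = some b :=
  Iff.rfl

lemma isWalk_singleton (edge : α → α → Prop) (a : α) : IsWalk edge [a] a a :=
  ⟨List.isChain_singleton a, rfl, rfl⟩

lemma walkWeight_singleton (w : α → α → ℝ) (a : α) : walkWeight w [a] = 0 := by
  simp [walkWeight]

lemma walkWeight_cons {l : List α} {a b : α} (hl : l.head? = some b) :
    walkWeight w (a :: l) = w a b + walkWeight w l := by
  obtain _ | ⟨b', t⟩ := l
  · simp at hl
  obtain rfl : b' = b := by simpa using hl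
  simp [walkWeight]

lemma isWalk_cons_cons {t : List α} {a a' b c : α} :
    IsWalk edge (a :: b :: t) a' c ↔ a = a' ∧ edge a b ∧ IsWalk edge (b :: t) b c := by
  simp only [isWalk_iff, List.isChain_cons_cons, List.head?_cons, Option.some.injEq,
    List.getLast?_cons_cons]
  tauto

lemma IsWalk.cons {l : List α} {a b c : α} (hab : edge a b) (hl : IsWalk edge l b c) :
    IsWalk edge (a :: l) a c := by
  obtain _ | ⟨b', t⟩ := l
  · simp [isWalk_iff] at hl
  obtain rfl : b' = b := by simpa using hl.2.1
  exact isWalk_cons_cons.2 ⟨rfl, hab, hl⟩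

lemma distG_eq_top_iff {a b : α} : distG edge w a b = ⊤ ↔ ¬ ∃ l, IsWalk edge l a b := by
  simp only [distG, sInf_eq_top]
  constructor
  · rintro h ⟨l, hl⟩
    exact EReal.coe_ne_top _ (h _ ⟨l, hl, rfl⟩)
  · rintro h _ ⟨l, hl, -⟩
    exact absurd ⟨l, hl⟩ h

namespace IsFeasiblePotential

variable {q : α → ℝ} (hq : IsFeasiblePotential edge w q)
include hq

lemma sub_le_walkWeight : ∀ {l : List α} {a b : α}, IsWalk edge l a b →
    q b - q a ≤ walkWeight w l
  | [], _, _, hl => by simp [isWalk_iff] at hl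
  | [x], a, b, hl => by
    obtain ⟨rfl, rfl⟩ : x = a ∧ x = b := by simpa [isWalk_iff] using hl
    simp [walkWeight_singleton]
  | x :: y :: t, a, b, hl => by
    obtain ⟨rfl, hxy, htail⟩ := isWalk_cons_cons.1 hl
    rw [walkWeight_cons rfl]
    linarith [hq hxy, sub_le_walkWeight htail]

lemma le_distG (a b : α) : ((q b - q a : ℝ) : EReal) ≤ distG edge w a b :=
  le_sInf <| by
    rintro _ ⟨l, hl, rfl⟩
    exact EReal.coe_le_coe_iff.2 (hq.sub_le_walkWeight hl)

end IsFeasiblePotential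

end Potentials

section Shortcut

variable {α : Type*} {edge : α → α → Prop} {w : α → α → ℝ} {q₀ : α → ℝ} {T : ℝ}

noncomputable def shortcutDist (edge : α → α → Prop) (w : α → α → ℝ) (q₀ : α → ℝ) (T : ℝ)
    (h j : α) : ℝ :=
  sInf (insert (q₀ h - q₀ j + T) {x | ∃ l, IsWalk edge l j h ∧ x = walkWeight w l})

lemma le_shortcutDist (h : α) {j : α} {r : ℝ} (hr_cap : r ≤ q₀ h - q₀ j + T)
    (hr_dist : (r : EReal) ≤ distG edge w j h) : r ≤ shortcutDist edge w q₀ T h j := by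
  refine le_csInf (Set.insert_nonempty _ _) ?_
  rintro x (rfl | ⟨l, hl, rfl⟩)
  · exact hr_cap
  · exact EReal.coe_le_coe_iff.1 (hr_dist.trans (sInf_le ⟨l, hl, rfl⟩))

variable (hq₀ : IsFeasiblePotential edge w q₀) (hT : 0 ≤ T) (h : α)
include hq₀ hT

lemma sub_mem_lowerBounds_shortcut (j : α) :
    q₀ h - q₀ j ∈ lowerBounds
      (insert (q₀ h - q₀ j + T) {x | ∃ l, IsWalk edge l j h ∧ x = walkWeight w l}) := by
  rintro x (rfl | ⟨l, hl, rfl⟩)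
  · linarith
  · exact hq₀.sub_le_walkWeight hl

lemma shortcutDist_le_add {j j' : α} (hjj' : edge j j') :
    shortcutDist edge w q₀ T h j ≤ w j j' + shortcutDist edge w q₀ T h j' := by
  have hbdd := (⟨_, sub_mem_lowerBounds_shortcut hq₀ hT h j⟩ : BddBelow _)
  suffices shortcutDist edge w q₀ T h j - w j j' ≤ shortcutDist edge w q₀ T h j' by linarith
  refine le_csInf (Set.insert_nonempty _ _) ?_
  rintro x (rfl | ⟨l, hl, rfl⟩)
  · have : shortcutDist edge w q₀ T h j ≤ q₀ h - q₀ j + T := csInf_le hbdd (Set.mem_insert _ _)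
    linarith [hq₀ hjj']
  · have : shortcutDist edge w q₀ T h j ≤ w j j' + walkWeight w l :=
      walkWeight_cons hl.2.1 ▸ csInf_le hbdd (Set.mem_insert_of_mem _ ⟨_, hl.cons hjj', rfl⟩)
    linarith

lemma shortcutDist_self : shortcutDist edge w q₀ T h h = 0 := by
  refine le_antisymm ?_ ?_
  · exact csInf_le ⟨_, sub_mem_lowerBounds_shortcut hq₀ hT h h⟩
      (Set.mem_insert_of_mem _ ⟨[h], isWalk_singleton edge h, (walkWeight_singleton w h).symm⟩)
  · rw [← sub_self (q₀ h)]
    exact le_csInf (Set.insert_nonempty _ _) (sub_mem_lowerBounds_shortcut hq₀ hT h h)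

lemma isFeasiblePotential_shortcut :
    IsFeasiblePotential edge w fun j => q₀ h - shortcutDist edge w q₀ T h j :=
  fun _ _ hjj' => by linarith [shortcutDist_le_add hq₀ hT h hjj']

end Shortcut

theorem sSup_isFeasiblePotential_eq_distG {α : Type*} {edge : α → α → Prop} {w : α → α → ℝ}
    {q₀ : α → ℝ} (hq₀ : IsFeasiblePotential edge w q₀) (g h : α) :
    sSup {x : EReal | ∃ q, IsFeasiblePotential edge w q ∧ x = ((q h - q g : ℝ) : EReal)}
      = distG edge w g h := by
  refine le_antisymm (sSup_le ?_) (le_of_forall_lt_imp_le_of_dense fun r hr => ?_)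
  · rintro _ ⟨q, hq, rfl⟩
    exact hq.le_distG g h
  induction r using EReal.rec with
  | bot => exact bot_le
  | top => exact absurd hr not_top_lt
  | coe r =>
    have hT : 0 ≤ max 0 (r - (q₀ h - q₀ g)) := le_max_left _ _
    refine le_sSup_of_le ⟨_, isFeasiblePotential_shortcut hq₀ hT h, rfl⟩ ?_
    rw [shortcutDist_self hq₀ hT h, sub_zero, sub_sub_cancel]
    have hr_cap : r ≤ q₀ h - q₀ g + max 0 (r - (q₀ h - q₀ g)) := by
      linarith [le_max_right 0 (r - (q₀ h - q₀ g))]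
    exact EReal.coe_le_coe_iff.2 (le_shortcutDist h hr_cap hr.le)

section Consistency

variable {V : Type*} [NormedAddCommGroup V]
  {n k m : ℕ} {c : Fin m → V} {e : Fin n → V} {pref : Fin n → Fin k → Fin m}

lemma weightG_le {i : Fin n} {j j' : Fin m} (hi : Prefers (pref i) j j') :
    weightG c e pref j j' ≤ ‖e i - c j'‖ - ‖e i - c j‖ :=
  csInf_le ((Set.finite_range fun i => ‖e i - c j'‖ - ‖e i - c j‖).subset
    (by rintro _ ⟨i, -, rfl⟩; exact ⟨i, rfl⟩)).bddBelow ⟨i, hi, rfl⟩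

lemma consistent_iff_isFeasiblePotential {q : Fin m → ℝ} :
    Consistent c e pref q ↔ IsFeasiblePotential (HasEdge pref) (weightG c e pref) q := by
  constructor
  · rintro hq j j' ⟨i, hi⟩
    refine le_csInf ⟨_, i, hi, rfl⟩ ?_
    rintro _ ⟨i', hi', rfl⟩
    linarith [hq i' j j' hi']
  · intro hq i j j' hi
    linarith [hq ⟨i, hi⟩, weightG_le (c := c) (e := e) hi]

end Consistency

theorem statement0_general {V : Type*} [NormedAddCommGroup V]
    {n k m : ℕ} (c : Fin m → V) (e : Fin n → V) (pref : Fin n → Fin k → Fin m)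
    (hind : ∃ q : Fin m → ℝ, Consistent c e pref q)
    (g h : Fin m) :
    sSup {x : EReal | ∃ q : Fin m → ℝ, Consistent c e pref q ∧ x = ((q h - q g : ℝ) : EReal)}
        = distG (HasEdge pref) (weightG c e pref) g h ∧
      ((¬ ∃ l : List (Fin m), IsWalk (HasEdge pref) l g h) ↔
        sSup {x : EReal | ∃ q : Fin m → ℝ, Consistent c e pref q ∧ x = ((q h - q g : ℝ) : EReal)}
          = ⊤) := by
  obtain ⟨q₀, hq₀⟩ := hind
  simp only [consistent_iff_isFeasiblePotential] at hq₀ ⊢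
  rw [sSup_isFeasiblePotential_eq_distG hq₀, distG_eq_top_iff]
  exact ⟨rfl, Iff.rfl⟩

/-- For inducible top-`k` profiles and candidates `g ≠ h`, the supremum of
`q̂ h - q̂ g` over all consistent `q̂` equals the shortest directed path distance from `g` to
`h` in `G(C, E, ≻^k)`; in particular that supremum is `+∞` exactly when there is no directed
`g → h` path. -/
theorem statement0 {V : Type*} [NormedAddCommGroup V] [NormedSpace ℝ V]
    {n k m : ℕ} (c : Fin m → V) (e : Fin n → V) (pref : Fin n → Fin k → Fin m)
    (hinj : ∀ i, Function.Injective (pref i))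
    (hind : ∃ q : Fin m → ℝ, Consistent c e pref q)
    (g h : Fin m) (hgh : g ≠ h) :
    sSup {x : EReal | ∃ q : Fin m → ℝ, Consistent c e pref q ∧ x = ((q h - q g : ℝ) : EReal)}
        = distG (HasEdge pref) (weightG c e pref) g h ∧
      ((¬ ∃ l : List (Fin m), IsWalk (HasEdge pref) l g h) ↔
        sSup {x : EReal | ∃ q : Fin m → ℝ, Consistent c e pref q ∧ x = ((q h - q g : ℝ) : EReal)}
          = ⊤) :=
  statement0_general c e pref hind g h
end

section
/- Let C = {c_1,…,c_m} be candidate locations, E = {e_1,…,e_n} expert locations in a normed vector space, q ∈ ℝ^m the true candidate qualities, and ≻^k a top-k ranking profile consistent with q. Then for every candidate j*, the regret of selecting j* satisfies max_{j∈[m]} q_j − q_{j*} ≤ max_{j∈[m]} d_G(j*, j), where d_G is the shortest directed path distance in G(C, E, ≻^k). -/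
open scoped Classical

/-!
Consistency says that along every edge `j → j'` of `G(C, E, ≻^k)` the quality can increase by
at most the edge weight, so `q` is a potential for the weights: summing along a walk bounds
`q j - q j*` by the walk's weight, hence by the shortest-path distance `d_G(j*, j)`.
-/

section Walks

variable {α : Type*} {edge : α → α → Prop} {w : α → α → ℝ}

theorem walkWeight_cons_cons (a b : α) (l : List α) :
    walkWeight w (a :: b :: l) = w a b + walkWeight w (b :: l) := by
  simp [walkWeight]

theorem sub_le_walkWeight_of_chain {f : α → ℝ} (hf : ∀ a b, edge a b → f b - f a ≤ w a b) :
    ∀ (l : List α) (a : α), (a :: l).IsChain edge →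
      f ((a :: l).getLast (List.cons_ne_nil a l)) - f a ≤ walkWeight w (a :: l)
  | [], a, _ => by simp [walkWeight]
  | b :: l, a, hchain => by
    obtain ⟨hab, hrest⟩ := List.isChain_cons_cons.mp hchain
    have := sub_le_walkWeight_of_chain hf l b hrest
    rw [List.getLast_cons_cons, walkWeight_cons_cons]
    linarith [hf a b hab]

theorem sub_le_walkWeight_of_isWalk {f : α → ℝ} (hf : ∀ a b, edge a b → f b - f a ≤ w a b)
    {l : List α} {g h : α} (hl : IsWalk edge l g h) : f h - f g ≤ walkWeight w l := by
  obtain ⟨hchain, hhead, hlast⟩ := hl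
  obtain ⟨t, rfl⟩ := List.head?_eq_some_iff.mp hhead
  rw [List.getLast?_eq_some_getLast (List.cons_ne_nil g t), Option.some.injEq] at hlast
  exact hlast ▸ sub_le_walkWeight_of_chain hf t g hchain

theorem sub_le_distG {f : α → ℝ} (hf : ∀ a b, edge a b → f b - f a ≤ w a b) (g h : α) :
    ((f h - f g : ℝ) : EReal) ≤ distG edge w g h := by
  refine le_sInf ?_
  rintro x ⟨l, hl, rfl⟩
  exact EReal.coe_le_coe_iff.mpr (sub_le_walkWeight_of_isWalk hf hl)

end Walks

theorem Consistent.sub_le_weightG {V : Type*} [NormedAddCommGroup V] [NormedSpace ℝ V]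
    {n k m : ℕ} {c : Fin m → V} {e : Fin n → V} {pref : Fin n → Fin k → Fin m}
    {q : Fin m → ℝ} (hcons : Consistent c e pref q) {j j' : Fin m} (hedge : HasEdge pref j j') :
    q j' - q j ≤ weightG c e pref j j' := by
  obtain ⟨i, hi⟩ := hedge
  refine le_csInf ⟨_, i, hi, rfl⟩ ?_
  rintro x ⟨i', hi', rfl⟩
  linarith [hcons i' j j' hi']

theorem statement1_general {V : Type*} [NormedAddCommGroup V] [NormedSpace ℝ V]
    {n k m : ℕ} (c : Fin m → V) (e : Fin n → V) (q : Fin m → ℝ)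
    (pref : Fin n → Fin k → Fin m)
    (hcons : Consistent c e pref q)
    (jstar : Fin m) :
    (⨆ j : Fin m, ((q j - q jstar : ℝ) : EReal)) ≤
      ⨆ j : Fin m, distG (HasEdge pref) (weightG c e pref) jstar j :=
  iSup_mono fun j => sub_le_distG (f := q) (fun _ _ => hcons.sub_le_weightG) jstar j

/-- If the true qualities `q` are consistent with the reported top-`k`
profile, then the regret of selecting any candidate `j*` is at most
`max_{j} d_G(j*, j)` in `G(C, E, ≻^k)`. -/
theorem statement1 {V : Type*} [NormedAddCommGroup V] [NormedSpace ℝ V]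
    {n k m : ℕ} (c : Fin m → V) (e : Fin n → V) (q : Fin m → ℝ)
    (pref : Fin n → Fin k → Fin m)
    (hinj : ∀ i, Function.Injective (pref i))
    (hcons : Consistent c e pref q)
    (jstar : Fin m) :
    (⨆ j : Fin m, ((q j - q jstar : ℝ) : EReal)) ≤
      ⨆ j : Fin m, distG (HasEdge pref) (weightG c e pref) jstar j :=
  statement1_general c e q pref hcons jstar
end

section
/- Let G be a finite simple graph on m vertices, k ≥ 1 an integer, and u ≠ v two vertices of G such that for every set J of at most k − 1 vertices with u, v ∉ J, the vertices u and v are connected in the graph G − J obtained by deleting J. Then G contains a u–v path with at most (m − 2)/k + 1 edges; in particular the graph distance between u and v is at most 2(m − 1)/k when k ≤ m − 1. -/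
/-!
Let `d = dist u v`. For `0 < i < d`, every `u`–`v` walk passes through the distance layer
`{w | dist u w = i}`, since distances from `u` change by at most one along an edge. Deleting a
layer therefore separates `u` from `v`, so each of the `d - 1` inner layers has at least `k`
vertices. These layers are disjoint and avoid `u` and `v`, whence `k (d - 1) ≤ m - 2`.
-/

open Finset

namespace SimpleGraph

variable {V : Type*} {G : SimpleGraph V}

lemma Walk.exists_mem_support_dist_eq {u a b : V} (p : G.Walk a b) {i : ℕ}
    (hua : G.Reachable u a) (ha : G.dist u a ≤ i) (hb : i ≤ G.dist u b) :
    ∃ x ∈ p.support, G.dist u x = i := by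
  induction p with
  | nil => exact ⟨_, by simp, le_antisymm ha hb⟩
  | @cons a c b hac p ih =>
    obtain ha_eq | ha_lt := eq_or_lt_of_le ha
    · exact ⟨a, by simp, ha_eq⟩
    have hc : G.dist u c ≤ i := by
      have := hac.reachable.dist_triangle_right u
      rw [dist_eq_one_iff_adj.mpr hac] at this
      omega
    obtain ⟨x, hx, hxi⟩ := ih (hua.trans hac.reachable) hc hb
    exact ⟨x, by simp [hx], hxi⟩

lemma Reachable.of_induce {s : Set V} {a b : s} (h : (G.induce s).Reachable a b) :
    G.Reachable a b :=
  h.map (Embedding.induce s).toHom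

variable [Fintype V]

noncomputable def distLayer (G : SimpleGraph V) (u : V) (i : ℕ) : Finset V :=
  univ.filter fun w ↦ G.dist u w = i

lemma mem_distLayer {u w : V} {i : ℕ} : w ∈ G.distLayer u i ↔ G.dist u w = i := by
  simp [distLayer]

lemma not_reachable_induce_compl_distLayer {u v : V} {i : ℕ} (hi : i < G.dist u v)
    (hu : u ∈ {w | w ∉ G.distLayer u i}) (hv : v ∈ {w | w ∉ G.distLayer u i}) :
    ¬ (G.induce {w | w ∉ G.distLayer u i}).Reachable ⟨u, hu⟩ ⟨v, hv⟩ := by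
  rintro ⟨p⟩
  obtain ⟨x, hx, hxi⟩ := (p.map (Embedding.induce _).toHom).exists_mem_support_dist_eq
    (Reachable.refl u) (by simp) hi.le
  rw [Walk.support_map] at hx
  obtain ⟨y, -, rfl⟩ := List.mem_map.mp hx
  exact y.2 (mem_distLayer.mpr hxi)

lemma sum_card_distLayer_le {u v : V} (huv : u ≠ v) :
    ∑ i ∈ Ioo 0 (G.dist u v), #(G.distLayer u i) ≤ Fintype.card V - 2 := by
  classical
  have hdisj : (Ioo 0 (G.dist u v) : Set ℕ).PairwiseDisjoint (G.distLayer u) := by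
    intro i _ j _ hij
    exact Finset.disjoint_left.mpr fun _ hi hj ↦
      hij ((mem_distLayer.mp hi).symm.trans (mem_distLayer.mp hj))
  have hsub : (Ioo 0 (G.dist u v)).biUnion (G.distLayer u) ⊆ univ \ {u, v} := by
    intro x hx
    simp only [mem_biUnion, mem_Ioo, mem_distLayer] at hx
    obtain ⟨i, ⟨hi₀, hi⟩, rfl⟩ := hx
    simp only [mem_sdiff, mem_univ, mem_insert, mem_singleton, true_and]
    rintro (rfl | rfl) <;> simp_all
  calc ∑ i ∈ Ioo 0 (G.dist u v), #(G.distLayer u i)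
      = #((Ioo 0 (G.dist u v)).biUnion (G.distLayer u)) := (card_biUnion hdisj).symm
    _ ≤ #(univ \ {u, v}) := card_le_card hsub
    _ ≤ Fintype.card V - 2 := by
      rw [card_univ_sdiff]
      rw [card_pair huv]

theorem mul_dist_sub_one_le_card_sub_two {u v : V} (huv : u ≠ v) {k : ℕ}
    (hconn : ∀ J : Finset V, #J < k → ∀ (hu : u ∈ {w | w ∉ J}) (hv : v ∈ {w | w ∉ J}),
      (G.induce {w | w ∉ J}).Reachable ⟨u, hu⟩ ⟨v, hv⟩) :
    k * (G.dist u v - 1) ≤ Fintype.card V - 2 := by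
  have hlayer : ∀ i ∈ Ioo 0 (G.dist u v), k ≤ #(G.distLayer u i) := by
    intro i hi
    rw [mem_Ioo] at hi
    have hu : u ∈ {w | w ∉ G.distLayer u i} := by simpa [mem_distLayer] using hi.1.ne
    have hv : v ∈ {w | w ∉ G.distLayer u i} := by simpa [mem_distLayer] using hi.2.ne'
    by_contra! hsmall
    exact not_reachable_induce_compl_distLayer hi.2 hu hv (hconn _ hsmall hu hv)
  calc k * (G.dist u v - 1) = #(Ioo 0 (G.dist u v)) • k := by simp [mul_comm]
    _ ≤ ∑ i ∈ Ioo 0 (G.dist u v), #(G.distLayer u i) := card_nsmul_le_sum _ _ _ hlayer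
    _ ≤ Fintype.card V - 2 := sum_card_distLayer_le huv

end SimpleGraph

open SimpleGraph

/-- Let `G` be a finite simple graph on `m` vertices, `k ≥ 1`, and `u ≠ v`
vertices such that deleting any set `J` of at most `k - 1` vertices (avoiding `u, v`) leaves
`u` and `v` connected. Then `G` has a `u`–`v` path with at most `(m - 2)/k + 1` edges; in
particular, if `k ≤ m - 1` then the graph distance from `u` to `v` is at most `2(m - 1)/k`. -/
theorem statement6 (m k : ℕ) (hk : 1 ≤ k) (G : SimpleGraph (Fin m)) (u v : Fin m)
    (huv : u ≠ v)
    (hconn : ∀ J : Finset (Fin m), J.card ≤ k - 1 →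
      ∀ (hu : u ∈ {w : Fin m | w ∉ J}) (hv : v ∈ {w : Fin m | w ∉ J}),
        (G.induce {w : Fin m | w ∉ J}).Reachable ⟨u, hu⟩ ⟨v, hv⟩) :
    (∃ p : G.Walk u v, p.IsPath ∧ (p.length : ℝ) ≤ ((m : ℝ) - 2) / k + 1) ∧
      (k ≤ m - 1 → (G.dist u v : ℝ) ≤ 2 * ((m : ℝ) - 1) / k) := by
  have hm : 2 ≤ m := by simpa [card_pair huv] using card_le_univ {u, v}
  have hreach : G.Reachable u v := (hconn ∅ (by simp) (by simp) (by simp)).of_induce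
  have hcount := mul_dist_sub_one_le_card_sub_two (G := G) (k := k) huv
    fun J hJ ↦ hconn J (by omega)
  rw [Fintype.card_fin] at hcount
  have hd : 1 ≤ G.dist u v := hreach.pos_dist_of_ne huv
  have hk' : (0 : ℝ) < k := by exact_mod_cast hk
  have hdist : (G.dist u v : ℝ) ≤ ((m : ℝ) - 2) / k + 1 := by
    have : (k : ℝ) * ((G.dist u v : ℝ) - 1) ≤ (m : ℝ) - 2 := by
      exact_mod_cast hcount
    rw [div_add_one hk'.ne', le_div_iff₀ hk']
    linarith
  refine ⟨?_, fun hkm ↦ hdist.trans ?_⟩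
  · obtain ⟨p, hp, hlen⟩ := hreach.exists_path_of_dist
    exact ⟨p, hp, hlen ▸ hdist⟩
  · have : (k : ℝ) ≤ m := by exact_mod_cast (by omega : k ≤ m)
    rw [div_add_one hk'.ne', div_le_div_iff_of_pos_right hk']
    linarith
end

section
/- Let (V, ‖·‖) be a normed vector space, ε > 0, Θ ⊆ V convex with diam(Θ) ≥ 12ε, k ≥ 1, and m ≥ k(N(B(0,1), ‖·‖, 1/4) + 1). Suppose E ⊆ Θ is a finite set of expert locations and f is a deterministic voting rule (a function mapping the candidate locations and any reported top-k ranking profile to a candidate) such that for every set C of m candidate locations in Θ, every q ∈ ℝ^m, and every top-k ranking profile ≻^k consistent with q, the selected candidate satisfies max_j q_j − q_{f(C,E,≻^k)} ≤ ε. Then |E| ≥ M(Θ, ‖·‖, 24ε)·(m/(k(N(B(0,1), ‖·‖, 1/4) + 1)) − 1). -/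
open scoped Classical

/-!
Fix a point `p` of the packing and call an expert near if it lies within `12ε` of `p`. If `t`
experts are near, then `m ≤ k (N + 1) (t + 1)`; the `12ε`-balls about the packing points are
disjoint, so summing `t` over the packing gives the bound.

Suppose `m` were larger. Put `k` candidates at every near expert. For a far expert, the point at
distance `12ε` from `p` towards it is `12ε` closer to it than `p`; choosing one such anchor per
cell of a `1/4`-cover of the directions gives at most `N` anchors, one of which is `6ε` closer than
`p` to each far expert. Put `k` candidates at every anchor and two decoys at `p` and at a point
`w` with `‖w - p‖ = 4ε`. Far experts rank the copies of their nearest anchor, near experts their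
own copies. This profile does not depend on the qualities, so the winner `g` is already fixed; give
quality `2ε` to a decoy more than `ε` away from `g`, `0` to the other candidates not at near
experts, and to the copies of a near expert the best utility it can get from those. The profile is
consistent with these qualities, and the regret of `g` exceeds `ε`.
-/

section QualityExtension

variable {V : Type*} [SeminormedAddCommGroup V] {ι : Type*}
  (B : Finset ι) (hB : B.Nonempty) (c : ι → V) (u : ι → ℝ)

noncomputable def bestUtility (x : V) : ℝ := B.sup' hB fun j => u j - ‖x - c j‖

/- Candidates outside `B` get the best utility available from `B` at their own location: the best
choice for an expert sitting there and, by the triangle inequality, no better than `B` for anyone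
else. -/
noncomputable def extendQuality (j : ι) : ℝ :=
  if j ∈ B then u j else bestUtility B hB c u (c j)

variable {B c u}

theorem le_bestUtility {j : ι} (hj : j ∈ B) (x : V) : u j - ‖x - c j‖ ≤ bestUtility B hB c u x :=
  Finset.le_sup' (fun j => u j - ‖x - c j‖) hj

theorem bestUtility_sub_norm_le (x y : V) :
    bestUtility B hB c u y - ‖x - y‖ ≤ bestUtility B hB c u x := by
  rw [sub_le_iff_le_add, bestUtility, Finset.sup'_le_iff]
  intro j hj
  have := norm_sub_le_norm_sub_add_norm_sub x y (c j)
  linarith [le_bestUtility (c := c) (u := u) hB hj x]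

theorem extendQuality_of_mem {j : ι} (hj : j ∈ B) : extendQuality B hB c u j = u j := if_pos hj

theorem extendQuality_of_notMem {j : ι} (hj : j ∉ B) :
    extendQuality B hB c u j = bestUtility B hB c u (c j) := if_neg hj

theorem extendQuality_sub_norm_le (j : ι) (x : V) :
    extendQuality B hB c u j - ‖x - c j‖ ≤ bestUtility B hB c u x := by
  by_cases hj : j ∈ B
  · rw [extendQuality_of_mem hB hj]; exact le_bestUtility hB hj x
  · rw [extendQuality_of_notMem hB hj]; exact bestUtility_sub_norm_le hB x (c j)

theorem extendQuality_single_lt [DecidableEq ι] {ε : ℝ} (hε : 0 < ε) {g j₀ : ι}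
    (hg : ε < ‖c g - c j₀‖) : extendQuality B hB c (Pi.single j₀ (2 * ε)) g < ε := by
  have hgj₀ : g ≠ j₀ := by rintro rfl; simp at hg; linarith
  by_cases hgB : g ∈ B
  · rwa [extendQuality_of_mem hB hgB, Pi.single_eq_of_ne hgj₀]
  rw [extendQuality_of_notMem hB hgB, bestUtility, Finset.sup'_lt_iff]
  intro j _
  by_cases hj : j = j₀
  · subst hj; rw [Pi.single_eq_same]; linarith
  · rw [Pi.single_eq_of_ne hj]; linarith [norm_nonneg (c g - c j)]

end QualityExtension

theorem consistent_extendQuality {V : Type*} [NormedAddCommGroup V] {n k m : ℕ}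
    {B : Finset (Fin m)} (hB : B.Nonempty) {c : Fin m → V} {u : Fin m → ℝ} {e : Fin n → V}
    {pref : Fin n → Fin k → Fin m}
    (hpref : ∀ i h, (pref i h ∉ B ∧ c (pref i h) = e i) ∨
      (pref i h ∈ B ∧ ∀ j ∈ B, u j - ‖e i - c j‖ ≤ u (pref i h) - ‖e i - c (pref i h)‖)) :
    Consistent c e pref (extendQuality B hB c u) := by
  rintro i _ j' ⟨h, rfl, -⟩
  refine (extendQuality_sub_norm_le hB j' (e i)).trans ?_
  rcases hpref i h with ⟨hout, hloc⟩ | ⟨hin, hbest⟩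
  · rw [extendQuality_of_notMem hB hout, hloc, sub_self, norm_zero, sub_zero]
  · rw [extendQuality_of_mem hB hin]
    exact Finset.sup'_le hB _ hbest

theorem false_of_regret_le {V : Type*} [NormedAddCommGroup V]
    {ε : ℝ} (hε : 0 < ε) {Θ : Set V} {k m n : ℕ} {e : Fin n → V}
    {f : (Fin m → V) → (Fin n → Fin k → Fin m) → Fin m}
    (hf : ∀ (c : Fin m → V), (∀ j, c j ∈ Θ) →
      ∀ (q : Fin m → ℝ) (pref : Fin n → Fin k → Fin m),
        (∀ i, Function.Injective (pref i)) → Consistent c e pref q →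
        ∀ j : Fin m, q j - q (f c pref) ≤ ε)
    {c : Fin m → V} (hc : ∀ j, c j ∈ Θ)
    {pref : Fin n → Fin k → Fin m} (hpref : ∀ i, Function.Injective (pref i))
    {B : Finset (Fin m)} {j₁ j₂ : Fin m} (hj₁ : j₁ ∈ B) (hj₂ : j₂ ∈ B)
    (hj₁₂ : 2 * ε < ‖c j₁ - c j₂‖)
    (hown : ∀ i h, pref i h ∉ B → c (pref i h) = e i)
    (hbase : ∀ i h, pref i h ∈ B → pref i h ≠ j₁ ∧ pref i h ≠ j₂ ∧
      (∀ j ∈ B, ‖e i - c (pref i h)‖ ≤ ‖e i - c j‖) ∧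
      ‖e i - c (pref i h)‖ + 2 * ε ≤ ‖e i - c j₁‖ ∧
      ‖e i - c (pref i h)‖ + 2 * ε ≤ ‖e i - c j₂‖) :
    False := by
  classical
  let g := f c pref
  obtain ⟨j₀, hj₀B, hj₀, hgj₀⟩ : ∃ j₀ ∈ B, (j₀ = j₁ ∨ j₀ = j₂) ∧ ε < ‖c g - c j₀‖ := by
    by_cases h₁ : ε < ‖c g - c j₁‖
    · exact ⟨j₁, hj₁, .inl rfl, h₁⟩
    refine ⟨j₂, hj₂, .inr rfl, ?_⟩
    linarith [norm_sub_le_norm_sub_add_norm_sub (c j₁) (c g) (c j₂), norm_sub_rev (c j₁) (c g)]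
  let q := extendQuality B ⟨j₀, hj₀B⟩ c (Pi.single j₀ (2 * ε))
  have hcons : Consistent c e pref q := by
    refine consistent_extendQuality _ fun i h => ?_
    by_cases hin : pref i h ∈ B
    · obtain ⟨hne₁, hne₂, hclosest, hfar₁, hfar₂⟩ := hbase i h hin
      have hne : pref i h ≠ j₀ := by rcases hj₀ with rfl | rfl <;> assumption
      refine .inr ⟨hin, fun j hj => ?_⟩
      rw [Pi.single_eq_of_ne hne, Pi.single_apply]
      split_ifs with hjj₀
      · rcases hj₀ with rfl | rfl <;> subst hjj₀ <;> linarith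
      · linarith [hclosest j hj]
    · exact .inl ⟨hin, hown i h hin⟩
  have hq₀ : q j₀ = 2 * ε := (extendQuality_of_mem _ hj₀B).trans (Pi.single_eq_same _ _)
  linarith [hf c hc q pref hpref hcons j₀, extendQuality_single_lt (B := B) ⟨j₀, hj₀B⟩ hε hgj₀]

theorem candidates_lt_of_regret_le {V : Type*} [NormedAddCommGroup V]
    {ε : ℝ} (hε : 0 < ε) {Θ : Set V} {k m n : ℕ} {e : Fin n → V} (he : ∀ i, e i ∈ Θ)
    {f : (Fin m → V) → (Fin n → Fin k → Fin m) → Fin m}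
    (hf : ∀ (c : Fin m → V), (∀ j, c j ∈ Θ) →
      ∀ (q : Fin m → ℝ) (pref : Fin n → Fin k → Fin m),
        (∀ i, Function.Injective (pref i)) → Consistent c e pref q →
        ∀ j : Fin m, q j - q (f c pref) ≤ ε)
    {p w : V} (hp : p ∈ Θ) (hw : w ∈ Θ) (hpw : ‖w - p‖ = 4 * ε)
    {Y : Finset V} (hY : ↑Y ⊆ Θ) {T : Finset (Fin n)}
    (hT : ∀ i ∉ T, ∃ y ∈ Y, ‖e i - y‖ + 6 * ε ≤ ‖e i - p‖) :
    m < k * T.card + k * Y.card + 2 := by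
  classical
  by_contra! hm
  obtain ⟨r, rfl⟩ := Nat.exists_eq_add_of_le hm
  let φ : (T × Fin k) ⊕ (Y × Fin k) ⊕ Fin (r + 2) ≃ Fin (k * T.card + k * Y.card + 2 + r) :=
    Fintype.equivFinOfCardEq (by simp; ring)
  let loc : (T × Fin k) ⊕ (Y × Fin k) ⊕ Fin (r + 2) → V :=
    Sum.elim (fun s => e s.1) (Sum.elim (fun s => s.1) (fun b => if b = 0 then w else p))
  have hdecoy (b : Fin (r + 2)) (x : V) : ‖x - p‖ - 4 * ε ≤ ‖x - loc (.inr (.inr b))‖ := by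
    simp only [loc, Sum.elim_inr]
    split_ifs
    · linarith [norm_sub_le_norm_sub_add_norm_sub x w p]
    · linarith [norm_nonneg (x - p)]
  let c := loc ∘ φ.symm
  have hc : ∀ s, c (φ s) = loc s := fun s => by simp [c]
  let B := Finset.univ.image (φ ∘ Sum.inr)
  have hB : ∀ s, φ (.inr s) ∈ B := fun s => Finset.mem_image_of_mem _ (Finset.mem_univ s)
  have nearest (i : Fin n) (hi : i ∉ T) : ∃ y ∈ Y, ∀ y' ∈ Y, ‖e i - y‖ ≤ ‖e i - y'‖ :=
    Y.exists_min_image _ (let ⟨y, hy, _⟩ := hT i hi; ⟨y, hy⟩)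
  choose σ hσY hσ using nearest
  let pref (i : Fin n) (h : Fin k) : Fin (k * T.card + k * Y.card + 2 + r) :=
    φ (if hi : i ∈ T then .inl (⟨i, hi⟩, h) else .inr (.inl (⟨σ i hi, hσY i hi⟩, h)))
  refine false_of_regret_le hε hf (c := c) (pref := pref) ?_ ?_ (hB (.inr 0)) (hB (.inr 1)) ?_
    (fun i h hout => ?_) (fun i h hin => ?_)
  · intro j
    obtain ⟨s, rfl⟩ := φ.surjective j
    rw [hc]
    rcases s with ⟨⟨i, _⟩, _⟩ | ⟨⟨y, hy⟩, _⟩ | b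
    · exact he i
    · exact hY hy
    · simp only [loc, Sum.elim_inr]
      split_ifs
      exacts [hw, hp]
  · intro i h h' hh
    simp only [pref] at hh
    split_ifs at hh with hi <;> simpa using φ.injective hh
  · simpa [hc, loc, hpw] using (by linarith : 2 * ε < 4 * ε)
  · by_cases hi : i ∈ T
    · simp only [pref, dif_pos hi, hc]; rfl
    · exact absurd (by simp only [pref, dif_neg hi]; exact hB _) hout
  · by_cases hi : i ∈ T
    · simp [pref, dif_pos hi, B] at hin
    obtain ⟨y, hyY, hy⟩ := hT i hi
    have hanchor : ∀ s, loc (.inr (.inl s)) = s.1 := fun _ => rfl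
    simp only [pref, dif_neg hi, hc, hanchor]
    refine ⟨by simp, by simp, fun j hj => ?_, ?_, ?_⟩
    · obtain ⟨s | b, -, rfl⟩ := Finset.mem_image.1 hj
      · simpa [hc, hanchor] using hσ i hi _ s.1.2
      · rw [Function.comp_apply, hc]
        linarith [hdecoy b (e i), hσ i hi y hyY]
    all_goals linarith [hdecoy 0 (e i), hdecoy 1 (e i), hσ i hi y hyY]

section

variable {V : Type*} [NormedAddCommGroup V] [NormedSpace ℝ V]

noncomputable def unitDir (p s : V) : V := ‖s - p‖⁻¹ • (s - p)

theorem norm_unitDir {p s : V} (h : s ≠ p) : ‖unitDir p s‖ = 1 := by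
  rw [unitDir, norm_smul, norm_inv, norm_norm,
    inv_mul_cancel₀ (norm_ne_zero_iff.2 (sub_ne_zero.2 h))]

theorem Convex.add_smul_unitDir_mem {Θ : Set V} (hΘ : Convex ℝ Θ) {p s : V} (hp : p ∈ Θ)
    (hs : s ∈ Θ) {r : ℝ} (hr : 0 ≤ r) (hrs : r ≤ ‖s - p‖) : p + r • unitDir p s ∈ Θ := by
  rw [unitDir, smul_smul]
  exact hΘ.add_smul_sub_mem hp hs ⟨by positivity, mul_inv_le_one_of_le₀ hrs (norm_nonneg _)⟩

theorem norm_sub_add_smul_unitDir {p s : V} {r : ℝ} (hr : 0 < r) (hrs : r ≤ ‖s - p‖) :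
    ‖s - (p + r • unitDir p s)‖ = ‖s - p‖ - r := by
  have hsp : ‖s - p‖ ≠ 0 := (hr.trans_le hrs).ne'
  have : s - (p + r • unitDir p s) = (1 - r * ‖s - p‖⁻¹) • (s - p) := by
    rw [unitDir, smul_smul, sub_smul, one_smul]; abel
  have hcoef : 0 ≤ 1 - r * ‖s - p‖⁻¹ := sub_nonneg.2 (mul_inv_le_one_of_le₀ hrs (norm_nonneg _))
  rw [this, norm_smul, Real.norm_of_nonneg hcoef, sub_mul, one_mul, inv_mul_cancel_right₀ hsp]

theorem Convex.exists_mem_norm_sub_eq {Θ : Set V} (hΘ : Convex ℝ Θ) {p : V} (hp : p ∈ Θ)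
    {r : ℝ} (hr : 0 < r) (hdiam : ENNReal.ofReal (2 * r) < Metric.ediam Θ) :
    ∃ w ∈ Θ, ‖w - p‖ = r := by
  obtain ⟨z, hz, hrz⟩ : ∃ z ∈ Θ, r ≤ ‖z - p‖ := by
    by_contra! hsmall
    refine hdiam.not_ge (Metric.ediam_le_of_forall_dist_le fun x hx y hy => ?_)
    calc dist x y ≤ dist x p + dist y p := dist_triangle_right x y p
      _ ≤ 2 * r := by rw [dist_eq_norm, dist_eq_norm]; linarith [hsmall x hx, hsmall y hy]
  have hzp : z ≠ p := by rintro rfl; simp at hrz; linarith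
  refine ⟨_, hΘ.add_smul_unitDir_mem hp hz hr.le hrz, ?_⟩
  rw [add_sub_cancel_left, norm_smul, norm_unitDir hzp, Real.norm_of_nonneg hr.le, mul_one]

theorem Convex.exists_anchors {Θ : Set V} (hΘ : Convex ℝ Θ) {p : V} (hp : p ∈ Θ)
    {r δ : ℝ} (hr : 0 < r) {X : Finset V}
    (hX : ∀ θ ∈ Metric.sphere (0 : V) 1, ∃ x ∈ X, ‖θ - x‖ ≤ δ)
    {S : Set V} (hSΘ : S ⊆ Θ) (hS : ∀ s ∈ S, r ≤ ‖s - p‖) :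
    ∃ Y : Finset V, ↑Y ⊆ Θ ∧ Y.card ≤ X.card ∧
      ∀ s ∈ S, ∃ y ∈ Y, ‖s - y‖ + (1 - 2 * δ) * r ≤ ‖s - p‖ := by
  classical
  let anchor (s : V) : V := p + r • unitDir p s
  let rep (x : V) : V := if h : ∃ s ∈ S, ‖unitDir p s - x‖ ≤ δ then anchor h.choose else p
  refine ⟨X.image rep, ?_, Finset.card_image_le, fun s hs => ?_⟩
  · intro y hy
    obtain ⟨x, -, rfl⟩ := Finset.mem_image.1 hy
    simp only [rep]
    split_ifs with h
    · exact hΘ.add_smul_unitDir_mem hp (hSΘ h.choose_spec.1) hr.le (hS _ h.choose_spec.1)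
    · exact hp
  have hsp : s ≠ p := by rintro rfl; have := hS s hs; simp at this; linarith
  obtain ⟨x, hxX, hx⟩ := hX (unitDir p s) (by simp [norm_unitDir hsp])
  have h : ∃ s ∈ S, ‖unitDir p s - x‖ ≤ δ := ⟨s, hs, hx⟩
  have hx₀ := h.choose_spec.2
  refine ⟨rep x, Finset.mem_image_of_mem rep hxX, ?_⟩
  have hclose : ‖anchor s - rep x‖ ≤ 2 * δ * r := by
    have : anchor s - rep x = r • (unitDir p s - unitDir p h.choose) := by
      simp only [rep, anchor, dif_pos h, smul_sub]; abel
    rw [this, norm_smul, Real.norm_of_nonneg hr.le]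
    have := norm_sub_le_norm_sub_add_norm_sub (unitDir p s) x (unitDir p h.choose)
    rw [norm_sub_rev x] at this
    nlinarith
  have := norm_sub_le_norm_sub_add_norm_sub s (anchor s) (rep x)
  rw [norm_sub_add_smul_unitDir hr (hS s hs)] at this
  linarith

theorem candidates_le_of_regret_le
    {ε : ℝ} (hε : 0 < ε) {Θ : Set V} (hconv : Convex ℝ Θ)
    (hdiam : ENNReal.ofReal (12 * ε) ≤ Metric.ediam Θ) {k m n : ℕ} (hk : 1 ≤ k)
    {e : Fin n → V} (he : ∀ i, e i ∈ Θ)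
    {f : (Fin m → V) → (Fin n → Fin k → Fin m) → Fin m}
    (hf : ∀ (c : Fin m → V), (∀ j, c j ∈ Θ) →
      ∀ (q : Fin m → ℝ) (pref : Fin n → Fin k → Fin m),
        (∀ i, Function.Injective (pref i)) → Consistent c e pref q →
        ∀ j : Fin m, q j - q (f c pref) ≤ ε)
    {X : Finset V} (hX : ∀ θ ∈ Metric.sphere (0 : V) 1, ∃ x ∈ X, ‖θ - x‖ ≤ 1 / 4)
    {p : V} (hp : p ∈ Θ) :
    m ≤ k * (X.card + 1) * ((Finset.univ.filter fun i => ‖e i - p‖ < 12 * ε).card + 1) := by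
  obtain ⟨w, hw, hpw⟩ := hconv.exists_mem_norm_sub_eq hp (r := 4 * ε) (by positivity) <|
    hdiam.trans_lt' <| (ENNReal.ofReal_lt_ofReal_iff (by positivity)).2 (by linarith)
  obtain ⟨Y, hYΘ, hYX, hY⟩ := hconv.exists_anchors hp (r := 12 * ε) (by positivity) hX
    (S := e '' {i | 12 * ε ≤ ‖e i - p‖}) (by rintro _ ⟨i, -, rfl⟩; exact he i)
    (by rintro _ ⟨i, hi, rfl⟩; exact hi)
  have hfar : ∀ i ∉ Finset.univ.filter fun i => ‖e i - p‖ < 12 * ε,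
      ∃ y ∈ Y, ‖e i - y‖ + 6 * ε ≤ ‖e i - p‖ := by
    intro i hi
    simp only [Finset.mem_filter, Finset.mem_univ, true_and, not_lt] at hi
    obtain ⟨y, hy, hle⟩ := hY (e i) ⟨i, hi, rfl⟩
    exact ⟨y, hy, by linarith⟩
  have hm := candidates_lt_of_regret_le hε he hf hp hw hpw hYΘ hfar
  have hkY := Nat.mul_le_mul_left k hYX
  set t := (Finset.univ.filter fun i => ‖e i - p‖ < 12 * ε).card
  calc m ≤ k * X.card + k * t + k := by linarith
    _ ≤ k * (X.card + 1) * (t + 1) := by nlinarith [Nat.zero_le (k * X.card * t)]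

end

theorem exists_cover_card_eq_coverNum {V : Type*} [NormedAddCommGroup V] {Θ : Set V} {δ : ℝ}
    (h : coverNum Θ δ ≠ ⊤) :
    ∃ X : Finset V, ↑X ⊆ Θ ∧ (∀ θ ∈ Θ, ∃ v ∈ X, ‖θ - v‖ ≤ δ) ∧
      X.card = (coverNum Θ δ).toNat := by
  have hne : {x : ℕ∞ | ∃ X : Finset V, ↑X ⊆ Θ ∧ (∀ θ ∈ Θ, ∃ v ∈ X, ‖θ - v‖ ≤ δ) ∧
      x = (X.card : ℕ∞)}.Nonempty := by
    by_contra hempty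
    exact h (by rw [coverNum, Set.not_nonempty_iff_eq_empty.1 hempty, sInf_empty])
  obtain ⟨X, hXΘ, hX, hcard⟩ := csInf_mem hne
  exact ⟨X, hXΘ, hX, by rw [coverNum, hcard, ENat.toNat_natCast]⟩

theorem sum_card_filter_norm_sub_lt_le {V : Type*} [SeminormedAddCommGroup V] {n : ℕ}
    (e : Fin n → V) {r : ℝ} {P : Finset V}
    (hP : ∀ x ∈ P, ∀ y ∈ P, x ≠ y → 2 * r ≤ ‖x - y‖) :
    ∑ p ∈ P, (Finset.univ.filter fun i => ‖e i - p‖ < r).card ≤ n := by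
  classical
  rw [← Finset.card_biUnion]
  · exact (Finset.card_le_univ _).trans_eq (Fintype.card_fin n)
  intro x hx y hy hxy
  refine Finset.disjoint_left.2 fun i hix hiy => ?_
  simp only [Finset.mem_filter] at hix hiy
  have := norm_sub_le_norm_sub_add_norm_sub x (e i) y
  rw [norm_sub_rev x (e i)] at this
  linarith [hP x hx y hy hxy, hix.2, hiy.2]

/-- **general lower bound.** Let `Θ ⊆ V` be convex with `diam(Θ) ≥ 12ε`, and
`m ≥ k(N(B(0,1), ‖·‖, 1/4) + 1)`. If a committee `e` of `nE` experts located in `Θ` together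
with a deterministic voting rule `f` guarantees regret at most `ε` for every set of `m`
candidates in `Θ`, every quality vector, and every consistent top-`k` profile, then
`nE ≥ M(Θ, ‖·‖, 24ε) · (m/(k(N(B(0,1), ‖·‖, 1/4) + 1)) - 1)`; equivalently, the latter bound
holds with `M` replaced by the cardinality of an arbitrary `24ε`-packing of `Θ`. -/
theorem statement8 {V : Type*} [NormedAddCommGroup V] [NormedSpace ℝ V]
    (ε : ℝ) (hε : 0 < ε) (Θ : Set V) (hconv : Convex ℝ Θ)
    (hdiam : ENNReal.ofReal (12 * ε) ≤ EMetric.diam Θ)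
    (k m nE : ℕ) (hk : 1 ≤ k)
    (hm : (k : ℕ∞) * (coverNum (Metric.closedBall (0 : V) 1) (1 / 4) + 1) ≤ (m : ℕ∞))
    (e : Fin nE → V) (he : ∀ i, e i ∈ Θ)
    (f : (Fin m → V) → (Fin nE → Fin k → Fin m) → Fin m)
    (hf : ∀ (c : Fin m → V), (∀ j, c j ∈ Θ) →
      ∀ (q : Fin m → ℝ) (pref : Fin nE → Fin k → Fin m),
        (∀ i, Function.Injective (pref i)) → Consistent c e pref q →
        ∀ j : Fin m, q j - q (f c pref) ≤ ε) :
    ∀ P : Finset V, ↑P ⊆ Θ → (∀ x ∈ P, ∀ y ∈ P, x ≠ y → 24 * ε ≤ ‖x - y‖) →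
      (P.card : ℝ) *
          ((m : ℝ) / ((k : ℝ) *
            (((coverNum (Metric.closedBall (0 : V) 1) (1 / 4)).toNat : ℝ) + 1)) - 1)
        ≤ (nE : ℝ) := by
  intro P hPΘ hP
  have hN : coverNum (Metric.closedBall (0 : V) 1) (1 / 4) ≠ ⊤ := by
    intro htop
    rw [htop, top_add, ENat.mul_top (by exact_mod_cast (by omega : k ≠ 0)), top_le_iff] at hm
    exact ENat.natCast_ne_top m hm
  obtain ⟨X, -, hX, hXcard⟩ := exists_cover_card_eq_coverNum hN
  have hden : (0 : ℝ) < k * (X.card + 1) := by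
    have : (0 : ℝ) < k := by exact_mod_cast hk
    positivity
  rw [← hXcard]
  calc (P.card : ℝ) * (m / (k * (X.card + 1)) - 1)
      = ∑ _p ∈ P, ((m : ℝ) / (k * (X.card + 1)) - 1) := by
        rw [Finset.sum_const, nsmul_eq_mul]
    _ ≤ ∑ p ∈ P, ((Finset.univ.filter fun i => ‖e i - p‖ < 12 * ε).card : ℝ) := by
        refine Finset.sum_le_sum fun p hp => ?_
        rw [sub_le_iff_le_add, div_le_iff₀ hden, mul_comm]
        exact_mod_cast candidates_le_of_regret_le hε hconv hdiam hk he hf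
          (fun θ hθ => hX θ (Metric.sphere_subset_closedBall hθ)) (hPΘ hp)
    _ ≤ nE := by
        exact_mod_cast sum_card_filter_norm_sub_lt_le e (r := 12 * ε) fun x hx y hy hxy => by
          linarith [hP x hx y hy hxy]
end

section
/- Let (V, ‖·‖) be a normed vector space, ε > 0, and Θ ⊆ V convex with 0 ∈ Θ. Let x be in the relative interior of B_Θ(0, 4ε) (so x ∈ Θ and ‖x‖ < 4ε), let W be a (2ε − ‖x‖/2)-cover of ∂B_Θ(x, 4ε − ‖x‖)[x, Θ ∖ B_Θ(0, 12ε)], and let w ∈ W. If λ ≥ 0 satisfies ‖x + λ(w − x)‖ = 4ε, then x + λ(w − x) ∈ Θ. -/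
section GeomDefs

variable {V : Type*} [NormedAddCommGroup V] [NormedSpace ℝ V]

/-- The relative boundary `∂S = closure S \ relint S` of a set. -/
def relBoundary (S : Set V) : Set V := closure S \ intrinsicInterior ℝ S

/-- `S[a, B]`: the intersection of `S` with all line segments from `a` to points of `B`. -/
def segBetween (S : Set V) (a : V) (B : Set V) : Set V :=
  S ∩ ⋃ b ∈ B, segment ℝ a b

/-- `X` is an internal `δ`-cover of `T`. -/
def IsCoverOf (X T : Set V) (δ : ℝ) : Prop :=
  X ⊆ T ∧ ∀ t ∈ T, ∃ x ∈ X, ‖t - x‖ ≤ δ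

end GeomDefs

/-!
Write `w = x + t (b - x)` with `b ∈ Θ`, `‖b‖ > 12ε`, `t ∈ [0, 1]`, so the point in question is
`p = x + s (b - x)` with `s = λ t ≥ 0`. If `s ≤ 1`, then `p` lies on the segment `[x, b] ⊆ Θ`.
If `s ≥ 1`, then `‖p‖ ≥ ‖b - x‖ - ‖x‖ ≥ ‖b‖ - 2‖x‖ > 12ε - 8ε = 4ε`, contradicting `‖p‖ = 4ε`.
-/

section RayThroughConvexSet

variable {V : Type*} [NormedAddCommGroup V] [NormedSpace ℝ V]

theorem norm_sub_two_mul_norm_le_norm_add_smul_sub (x b : V) {s : ℝ} (hs : 1 ≤ s) :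
    ‖b‖ - 2 * ‖x‖ ≤ ‖x + s • (b - x)‖ := by
  have hray : s * ‖b - x‖ - ‖x‖ ≤ ‖x + s • (b - x)‖ := by
    have := norm_sub_norm_le (s • (b - x)) (-x)
    rwa [norm_smul, Real.norm_of_nonneg (by linarith), norm_neg, sub_neg_eq_add, add_comm] at this
  have hscale : ‖b - x‖ ≤ s * ‖b - x‖ := le_mul_of_one_le_left (norm_nonneg _) hs
  linarith [norm_sub_norm_le b x]

theorem Convex.add_smul_sub_mem_of_norm_lt {Θ : Set V} (hΘ : Convex ℝ Θ) {x b : V}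
    (hx : x ∈ Θ) (hb : b ∈ Θ) {s : ℝ} (hs : 0 ≤ s)
    (hnorm : ‖x + s • (b - x)‖ < ‖b‖ - 2 * ‖x‖) : x + s • (b - x) ∈ Θ := by
  refine hΘ.add_smul_sub_mem hx hb ⟨hs, ?_⟩
  by_contra! hs_gt
  linarith [norm_sub_two_mul_norm_le_norm_add_smul_sub x b hs_gt.le]

end RayThroughConvexSet

theorem statement10_general {V : Type*} [NormedAddCommGroup V] [NormedSpace ℝ V]
    (ε : ℝ) (Θ : Set V) (hconv : Convex ℝ Θ)
    (x : V)
    (hxΘ : x ∈ Θ) (hxlt : ‖x‖ < 4 * ε)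
    (W : Set V)
    (hW : IsCoverOf W
      (segBetween (relBoundary (Θ ∩ Metric.closedBall x (4 * ε - ‖x‖))) x
        (Θ \ (Θ ∩ Metric.closedBall 0 (12 * ε))))
      (2 * ε - ‖x‖ / 2))
    (w : V) (hw : w ∈ W) (lam : ℝ) (hlam : 0 ≤ lam)
    (hnorm : ‖x + lam • (w - x)‖ = 4 * ε) :
    x + lam • (w - x) ∈ Θ := by
  obtain ⟨-, hw_seg⟩ := hW.1 hw
  obtain ⟨b, ⟨hbΘ, hb_out⟩, hwb⟩ := Set.mem_iUnion₂.1 hw_seg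
  have hb_norm : 12 * ε < ‖b‖ := by
    by_contra! hb
    exact hb_out ⟨hbΘ, mem_closedBall_zero_iff.2 hb⟩
  rw [segment_eq_image'] at hwb
  obtain ⟨t, ht, rfl⟩ := hwb
  rw [add_sub_cancel_left, smul_smul] at hnorm ⊢
  exact hconv.add_smul_sub_mem_of_norm_lt hxΘ hbΘ (mul_nonneg hlam ht.1) (by linarith)

/-- Let `Θ` be convex with `0 ∈ Θ`, let `x` be in the relative interior of
`B_Θ(0, 4ε)` (so `x ∈ Θ` and `‖x‖ < 4ε`), and let `W` be a `(2ε - ‖x‖/2)`-cover of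
`∂B_Θ(x, 4ε - ‖x‖)[x, Θ ∖ B_Θ(0, 12ε)]`. For any `w ∈ W` and `λ ≥ 0` with
`‖x + λ(w - x)‖ = 4ε`, the point `x + λ(w - x)` lies in `Θ`. -/
theorem statement10 {V : Type*} [NormedAddCommGroup V] [NormedSpace ℝ V]
    (ε : ℝ) (hε : 0 < ε) (Θ : Set V) (hconv : Convex ℝ Θ) (h0 : (0 : V) ∈ Θ)
    (x : V) (hxrel : x ∈ intrinsicInterior ℝ (Θ ∩ Metric.closedBall 0 (4 * ε)))
    (hxΘ : x ∈ Θ) (hxlt : ‖x‖ < 4 * ε)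
    (W : Set V)
    (hW : IsCoverOf W
      (segBetween (relBoundary (Θ ∩ Metric.closedBall x (4 * ε - ‖x‖))) x
        (Θ \ (Θ ∩ Metric.closedBall 0 (12 * ε))))
      (2 * ε - ‖x‖ / 2))
    (w : V) (hw : w ∈ W) (lam : ℝ) (hlam : 0 ≤ lam)
    (hnorm : ‖x + lam • (w - x)‖ = 4 * ε) :
    x + lam • (w - x) ∈ Θ :=
  statement10_general ε Θ hconv x hxΘ hxlt W hW w hw lam hlam hnorm
end

section
/- Let (V, ‖·‖) be a normed vector space, ε > 0, and Θ ⊆ V convex with 0 ∈ Θ. Let x be in the relative interior of B_Θ(0, 4ε) (so x ∈ Θ and ‖x‖ < 4ε), let y ∈ Θ ∖ B_Θ(0, 12ε) (so y ∈ Θ and ‖y‖ > 12ε), and let W be a (2ε − ‖x‖/2)-cover of ∂B_Θ(x, 4ε − ‖x‖)[x, Θ ∖ B_Θ(0, 12ε)]. Then there exists w ∈ W such that, for λ ≥ 0 satisfying ‖x + λ(w − x)‖ = 4ε, one has ‖y − (x + λ(w − x))‖ ≤ ‖y − x‖ − (2ε − ‖x‖/2). -/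
open Metric Set Filter Topology

section RelativeBoundary

variable {V : Type*} [NormedAddCommGroup V] [NormedSpace ℝ V]

theorem mem_intrinsicInterior_iff_exists_ball {s : Set V} {z : V} :
    z ∈ intrinsicInterior ℝ s ↔
      z ∈ affineSpan ℝ s ∧ ∃ ρ > 0, ball z ρ ∩ affineSpan ℝ s ⊆ s := by
  simp only [mem_intrinsicInterior, mem_interior_iff_mem_nhds, Metric.mem_nhds_iff]
  constructor
  · rintro ⟨⟨z, hz⟩, ⟨ρ, hρ, hball⟩, rfl⟩
    exact ⟨hz, ρ, hρ, fun v ⟨hv, hvA⟩ => hball (show ⟨v, hvA⟩ ∈ ball _ ρ from hv)⟩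
  · rintro ⟨hz, ρ, hρ, hball⟩
    exact ⟨⟨z, hz⟩, ⟨ρ, hρ, fun v hv => hball ⟨hv, v.2⟩⟩, rfl⟩

theorem Convex.affineSpan_inter_of_mem_nhds {s t : Set V} {c : V} (hs : Convex ℝ s)
    (hc : c ∈ s) (ht : t ∈ 𝓝 c) : affineSpan ℝ (s ∩ t) = affineSpan ℝ s := by
  refine le_antisymm (affineSpan_mono ℝ inter_subset_left) (affineSpan_le.2 fun θ hθ => ?_)
  have hlim : Tendsto (AffineMap.lineMap c θ) (𝓝[>] (0 : ℝ)) (𝓝 c) :=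
    (AffineMap.lineMap_continuous.tendsto' 0 c (by simp)).mono_left nhdsWithin_le_nhds
  obtain ⟨τ, hτt, hτ0, hτ1⟩ :=
    ((hlim.eventually_mem ht).and (Ioc_mem_nhdsGT one_pos)).exists
  have hp : AffineMap.homothety c τ θ ∈ s ∩ t := ⟨hs.lineMap_mem hc hθ ⟨hτ0.le, hτ1⟩, hτt⟩
  have hcA : c ∈ affineSpan ℝ (s ∩ t) := subset_affineSpan ℝ _ ⟨hc, mem_of_mem_nhds ht⟩
  simpa [← AffineMap.homothety_mul_apply, inv_mul_cancel₀ hτ0.ne'] using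
    AffineMap.homothety_mem hcA τ⁻¹ (subset_affineSpan ℝ _ hp)

theorem Convex.mem_intrinsicInterior_inter_iff {s t : Set V} {x : V} (hs : Convex ℝ s)
    (ht : t ∈ 𝓝 x) : x ∈ intrinsicInterior ℝ (s ∩ t) ↔ x ∈ intrinsicInterior ℝ s := by
  constructor
  · intro hx
    have hspan := hs.affineSpan_inter_of_mem_nhds (intrinsicInterior_subset hx).1 ht
    rw [mem_intrinsicInterior_iff_exists_ball, hspan] at hx
    obtain ⟨hxA, ρ, hρ, hball⟩ := hx
    exact mem_intrinsicInterior_iff_exists_ball.2 ⟨hxA, ρ, hρ, hball.trans inter_subset_left⟩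
  · intro hx
    have hspan := hs.affineSpan_inter_of_mem_nhds (intrinsicInterior_subset hx) ht
    obtain ⟨hxA, ρ, hρ, hball⟩ := mem_intrinsicInterior_iff_exists_ball.1 hx
    obtain ⟨ρ', hρ', hρ't⟩ := Metric.mem_nhds_iff.1 ht
    refine mem_intrinsicInterior_iff_exists_ball.2 ⟨hspan ▸ hxA, min ρ ρ', lt_min hρ hρ', ?_⟩
    rintro v ⟨hv, hvA⟩
    exact ⟨hball ⟨ball_subset_ball (min_le_left _ _) hv, hspan ▸ hvA⟩,
      hρ't (ball_subset_ball (min_le_right _ _) hv)⟩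

theorem Convex.combo_intrinsicInterior_self_mem_intrinsicInterior {s : Set V} {x y : V}
    (hs : Convex ℝ s) (hx : x ∈ intrinsicInterior ℝ s) (hy : y ∈ s) {a b : ℝ} (ha : 0 < a)
    (hb : 0 ≤ b) (hab : a + b = 1) : a • x + b • y ∈ intrinsicInterior ℝ s := by
  obtain rfl : b = 1 - a := by linarith
  obtain ⟨hxA, ρ, hρ, hball⟩ := mem_intrinsicInterior_iff_exists_ball.1 hx
  have hyA : y ∈ affineSpan ℝ s := subset_affineSpan ℝ s hy
  have hw : a • x + (1 - a) • y = AffineMap.homothety y a x := by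
    rw [AffineMap.homothety_eq_lineMap, AffineMap.lineMap_apply_module, add_comm]
  rw [hw, mem_intrinsicInterior_iff_exists_ball]
  refine ⟨AffineMap.homothety_mem hyA a hxA, a * ρ, mul_pos ha hρ, ?_⟩
  -- `homothety y a⁻¹` maps `ball (homothety y a x) (a * ρ)` onto `ball x ρ`
  rintro v ⟨hv, hvA⟩
  have hu : AffineMap.homothety y a⁻¹ v ∈ s := by
    refine hball ⟨?_, AffineMap.homothety_mem hyA _ hvA⟩
    have hx' : AffineMap.homothety y a⁻¹ (AffineMap.homothety y a x) = x := by
      rw [← AffineMap.homothety_mul_apply, inv_mul_cancel₀ ha.ne', AffineMap.homothety_one]; rfl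
    rw [mem_ball, ← hx', dist_eq_norm]
    simp only [AffineMap.homothety_apply, vsub_eq_sub, vadd_eq_add, add_sub_add_right_eq_sub,
      ← smul_sub, sub_sub_sub_cancel_right, norm_smul, norm_inv, Real.norm_of_nonneg ha.le]
    rw [mem_ball, dist_eq_norm] at hv
    rw [inv_mul_lt_iff₀ ha]
    exact hv
  have hv' : AffineMap.homothety y a (AffineMap.homothety y a⁻¹ v) = v := by
    rw [← AffineMap.homothety_mul_apply, mul_inv_cancel₀ ha.ne', AffineMap.homothety_one]; rfl
  rw [← hv', AffineMap.homothety_eq_lineMap]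
  exact hs.lineMap_mem hy hu ⟨ha.le, by linarith⟩

theorem dist_lt_of_mem_intrinsicInterior {S : Set V} {x z : V} {r : ℝ}
    (hS : S ⊆ closedBall x r) (hx : x ∈ affineSpan ℝ S) (hz : z ∈ intrinsicInterior ℝ S)
    (hzx : z ≠ x) : dist z x < r := by
  obtain ⟨hzA, ρ, hρ, hball⟩ := mem_intrinsicInterior_iff_exists_ball.1 hz
  have hlim : Tendsto (AffineMap.lineMap x z) (𝓝[>] (1 : ℝ)) (𝓝 z) :=
    (AffineMap.lineMap_continuous.tendsto' 1 z (by simp)).mono_left nhdsWithin_le_nhds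
  obtain ⟨τ, hτ, hτ1 : 1 < τ⟩ :=
    ((hlim.eventually_mem (ball_mem_nhds z hρ)).and self_mem_nhdsWithin).exists
  have hp := hS (hball ⟨hτ, AffineMap.lineMap_mem τ hx hzA⟩)
  rw [mem_closedBall, dist_lineMap_left, Real.norm_of_nonneg (by linarith), dist_comm] at hp
  nlinarith [dist_pos.2 hzx]

theorem mem_relBoundary_inter_closedBall {s : Set V} {x z : V} {r : ℝ} (hx : x ∈ s)
    (hz : z ∈ s) (hzx : dist z x = r) (hr : 0 < r) : z ∈ relBoundary (s ∩ closedBall x r) := by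
  refine ⟨subset_closure ⟨hz, hzx.le⟩, fun hint => ?_⟩
  have hxA : x ∈ affineSpan ℝ (s ∩ closedBall x r) :=
    subset_affineSpan ℝ _ ⟨hx, mem_closedBall_self hr.le⟩
  exact (dist_lt_of_mem_intrinsicInterior inter_subset_right hxA hint
    (dist_pos.1 (hzx ▸ hr))).ne hzx

theorem Convex.dist_eq_of_mem_segBetween {s B : Set V} {x w : V} {r : ℝ} (hs : Convex ℝ s)
    (hx : x ∈ intrinsicInterior ℝ s) (hB : B ⊆ s \ closedBall x r)
    (hw : w ∈ segBetween (relBoundary (s ∩ closedBall x r)) x B) : dist w x = r := by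
  obtain ⟨⟨hwcl, hwint⟩, hwseg⟩ := hw
  have hle : dist w x ≤ r := closure_minimal inter_subset_right isClosed_closedBall hwcl
  refine hle.antisymm (not_lt.1 fun hlt => hwint ?_)
  obtain ⟨b, hbB, a, c, ha, hc, hac, rfl⟩ := mem_iUnion₂.1 hwseg
  have ha' : 0 < a := by
    refine ha.lt_of_ne fun ha0 => (hB hbB).2 ?_
    subst ha0
    obtain rfl : c = 1 := by linarith
    simpa using hlt.le
  rw [hs.mem_intrinsicInterior_inter_iff (closedBall_mem_nhds_of_mem hlt)]
  exact hs.combo_intrinsicInterior_self_mem_intrinsicInterior hx (hB hbB).1 ha' hc hac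

theorem Convex.add_div_norm_smul_mem_segBetween {s B : Set V} {x y : V} {r : ℝ}
    (hs : Convex ℝ s) (hx : x ∈ s) (hy : y ∈ B) (hB : B ⊆ s) (hr : 0 < r) (hry : r ≤ ‖y - x‖) :
    x + (r / ‖y - x‖) • (y - x) ∈ segBetween (relBoundary (s ∩ closedBall x r)) x B := by
  have ht0 : 0 ≤ r / ‖y - x‖ := div_nonneg hr.le (norm_nonneg _)
  have hseg : x + (r / ‖y - x‖) • (y - x) ∈ segment ℝ x y :=
    segment_eq_image' ℝ x y ▸ ⟨_, ⟨ht0, (div_le_one (hr.trans_le hry)).2 hry⟩, rfl⟩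
  have hdist : dist (x + (r / ‖y - x‖) • (y - x)) x = r := by
    rw [dist_eq_norm, add_sub_cancel_left, norm_smul, Real.norm_of_nonneg ht0,
      div_mul_cancel₀ r (hr.trans_le hry).ne']
  exact ⟨mem_relBoundary_inter_closedBall hx (hs.segment_subset hx (hB hy) hseg) hdist hr,
    mem_biUnion hy hseg⟩

theorem norm_sub_add_smul_sub_le (x y w : V) {t lam : ℝ} (hlam : 0 ≤ lam) (hlt : lam * t ≤ 1) :
    ‖y - (x + lam • (w - x))‖ ≤ (1 - lam * t) * ‖y - x‖ + lam * ‖w - (x + t • (y - x))‖ := by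
  have hdecomp : y - (x + lam • (w - x)) =
      (1 - lam * t) • (y - x) - lam • (w - (x + t • (y - x))) := by module
  calc _ ≤ ‖(1 - lam * t) • (y - x)‖ + ‖lam • (w - (x + t • (y - x)))‖ :=
        hdecomp ▸ norm_sub_le _ _
    _ = _ := by
      rw [norm_smul, norm_smul, Real.norm_of_nonneg (sub_nonneg.2 hlt), Real.norm_of_nonneg hlam]

theorem norm_sub_add_smul_sub_le_sub_half {x y w : V} {r lam : ℝ} (hr : 0 < r)
    (hwz : ‖w - (x + (r / ‖y - x‖) • (y - x))‖ ≤ r / 2) (hlam : 1 ≤ lam)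
    (hlamr : lam * r ≤ ‖y - x‖) : ‖y - (x + lam • (w - x))‖ ≤ ‖y - x‖ - r / 2 := by
  have hd : 0 < ‖y - x‖ := by nlinarith
  have ht : r / ‖y - x‖ * ‖y - x‖ = r := div_mul_cancel₀ r hd.ne'
  have hlt : lam * (r / ‖y - x‖) ≤ 1 := by rwa [← mul_div_assoc, div_le_one hd]
  calc ‖y - (x + lam • (w - x))‖
      ≤ (1 - lam * (r / ‖y - x‖)) * ‖y - x‖ + lam * ‖w - (x + (r / ‖y - x‖) • (y - x))‖ :=
        norm_sub_add_smul_sub_le x y w (by linarith) hlt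
    _ ≤ ‖y - x‖ - lam * r + lam * (r / 2) := by nlinarith
    _ ≤ ‖y - x‖ - r / 2 := by nlinarith

end RelativeBoundary

theorem statement11_general {V : Type*} [NormedAddCommGroup V] [NormedSpace ℝ V]
    (ε : ℝ) (Θ : Set V) (hconv : Convex ℝ Θ)
    (x : V) (hxrel : x ∈ intrinsicInterior ℝ (Θ ∩ Metric.closedBall 0 (4 * ε)))
    (hxlt : ‖x‖ < 4 * ε)
    (y : V) (hyΘ : y ∈ Θ) (hygt : 12 * ε < ‖y‖)
    (W : Set V)
    (hW : IsCoverOf W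
      (segBetween (relBoundary (Θ ∩ Metric.closedBall x (4 * ε - ‖x‖))) x
        (Θ \ (Θ ∩ Metric.closedBall 0 (12 * ε))))
      (2 * ε - ‖x‖ / 2)) :
    ∃ w ∈ W, ∀ lam : ℝ, 0 ≤ lam → ‖x + lam • (w - x)‖ = 4 * ε →
      ‖y - (x + lam • (w - x))‖ ≤ ‖y - x‖ - (2 * ε - ‖x‖ / 2) := by
  obtain ⟨hWT, hWcov⟩ := hW
  set r := 4 * ε - ‖x‖ with hr_def
  have hr : 0 < r := by linarith [norm_nonneg x]
  have hyx : 8 * ε < ‖y - x‖ := by linarith [norm_sub_norm_le y x]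
  have hxint : x ∈ intrinsicInterior ℝ Θ :=
    (hconv.mem_intrinsicInterior_inter_iff (closedBall_mem_nhds_of_mem (by simpa))).1 hxrel
  have hy : y ∈ Θ \ (Θ ∩ closedBall 0 (12 * ε)) :=
    ⟨hyΘ, fun hy => by linarith [mem_closedBall_zero_iff.1 hy.2]⟩
  have hB : Θ \ (Θ ∩ closedBall 0 (12 * ε)) ⊆ Θ \ closedBall x r := by
    rintro b ⟨hbΘ, hb⟩
    refine ⟨hbΘ, fun hbx => hb ⟨hbΘ, mem_closedBall_zero_iff.2 ?_⟩⟩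
    linarith [mem_closedBall.1 hbx, dist_eq_norm b x, norm_sub_norm_le b x, norm_nonneg x]
  obtain ⟨w, hwW, hwz⟩ := hWcov _ <| hconv.add_div_norm_smul_mem_segBetween
    (intrinsicInterior_subset hxrel).1 hy (hB.trans sdiff_subset) hr (by linarith [norm_nonneg x])
  have hwx : ‖w - x‖ = r := by
    rw [← dist_eq_norm]
    exact hconv.dist_eq_of_mem_segBetween hxint hB (hWT hwW)
  refine ⟨w, hwW, fun lam hlam hp => ?_⟩
  have hpx : ‖x + lam • (w - x) - x‖ = lam * r := by
    rw [add_sub_cancel_left, norm_smul, Real.norm_of_nonneg hlam, hwx]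
  have hlam1 : 1 ≤ lam := by nlinarith [norm_sub_norm_le (x + lam • (w - x)) x]
  have hlamr : lam * r ≤ ‖y - x‖ := by linarith [norm_sub_le (x + lam • (w - x)) x]
  have := norm_sub_add_smul_sub_le_sub_half (w := w) hr (by rw [norm_sub_rev]; linarith) hlam1 hlamr
  linarith

/-- Let `Θ` be convex with `0 ∈ Θ`, `x` in the relative interior of
`B_Θ(0, 4ε)` (so `x ∈ Θ` and `‖x‖ < 4ε`), `y ∈ Θ ∖ B_Θ(0, 12ε)` (so `y ∈ Θ` and
`‖y‖ > 12ε`), and `W` a `(2ε - ‖x‖/2)`-cover of `∂B_Θ(x, 4ε - ‖x‖)[x, Θ ∖ B_Θ(0, 12ε)]`.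
Then some `w ∈ W` satisfies: for every `λ ≥ 0` with `‖x + λ(w - x)‖ = 4ε`,
`‖y - (x + λ(w - x))‖ ≤ ‖y - x‖ - (2ε - ‖x‖/2)`. -/
theorem statement11 {V : Type*} [NormedAddCommGroup V] [NormedSpace ℝ V]
    (ε : ℝ) (hε : 0 < ε) (Θ : Set V) (hconv : Convex ℝ Θ) (h0 : (0 : V) ∈ Θ)
    (x : V) (hxrel : x ∈ intrinsicInterior ℝ (Θ ∩ Metric.closedBall 0 (4 * ε)))
    (hxΘ : x ∈ Θ) (hxlt : ‖x‖ < 4 * ε)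
    (y : V) (hyΘ : y ∈ Θ) (hygt : 12 * ε < ‖y‖)
    (W : Set V)
    (hW : IsCoverOf W
      (segBetween (relBoundary (Θ ∩ Metric.closedBall x (4 * ε - ‖x‖))) x
        (Θ \ (Θ ∩ Metric.closedBall 0 (12 * ε))))
      (2 * ε - ‖x‖ / 2)) :
    ∃ w ∈ W, ∀ lam : ℝ, 0 ≤ lam → ‖x + lam • (w - x)‖ = 4 * ε →
      ‖y - (x + lam • (w - x))‖ ≤ ‖y - x‖ - (2 * ε - ‖x‖ / 2) :=
  statement11_general ε Θ hconv x hxrel hxlt y hyΘ hygt W hW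
end

section
/- For every real number x > 0, the Gamma function satisfies the strict inequalities √(2π(x+1))/e · (x/e)^x < Γ(x+1) < √(2π(x+1)) · (x/e)^x · e^{1/12}. -/
/-!
Pick an integer `m` with `x ≤ m < x + 1`. Log-convexity of `Γ`, used on `[m, m + 1]` for the
upper bound and on `[x + 1, x + 2]` (through the point `m + 1`) for the lower one, compares
`log Γ(x + 1)` with `log m!`. Stirling's bounds `√(2πm) (m/e)^m ≤ m! ≤ √(2πm) (m/e)^m e^{1/(12m)}`
control `m!`; the upper one comes from Robbins' estimate for the successive differences of the
Stirling sequence. Moving from `m` back to `x` then costs at most a factor `e` below and nothing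
above, using only `log y ≤ y - 1`.
-/

open Real Filter Set
open scoped Nat Topology

namespace Stirling

theorem log_stirlingSeq_le (n : ℕ) :
    log (stirlingSeq (n + 1)) ≤ log √π + 1 / (12 * (n + 1)) := by
  set g : ℕ → ℝ := fun k => log (stirlingSeq (k + 1)) - 1 / (12 * (k + 1))
  have hmono : Monotone g := by
    refine monotone_nat_of_le_succ fun k => ?_
    have h := log_stirlingSeq_sdiff_le (k + 1)
    have hsplit : (1 : ℝ) / (12 * (k + 1)) - 1 / (12 * (k + 1 + 1))
        = 1 / (12 * (k + 1) * (k + 1 + 1)) := by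
      field_simp; ring
    simp only [g]
    push_cast at h ⊢
    linarith
  have hlim : Tendsto g atTop (𝓝 (log √π - 0)) := by
    refine ((tendsto_stirlingSeq_sqrt_pi.comp (tendsto_add_atTop_nat 1)).log
      (by positivity)).sub ?_
    simpa [div_eq_mul_inv, mul_comm] using
      (tendsto_one_div_add_atTop_nhds_zero_nat (𝕜 := ℝ)).div_const 12
  linarith [hmono.ge_of_tendsto hlim n]

theorem log_factorial_le_stirling {n : ℕ} (hn : n ≠ 0) :
    log n ! ≤ n * log n - n + log n / 2 + log (2 * π) / 2 + 1 / (12 * n) := by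
  obtain ⟨k, rfl⟩ := Nat.exists_eq_succ_of_ne_zero hn
  have h := log_stirlingSeq_le k
  rw [log_stirlingSeq_formula, log_sqrt pi_pos.le, log_mul two_ne_zero (by positivity),
    log_div (by positivity) (exp_pos 1).ne', log_exp] at h
  rw [log_mul two_ne_zero pi_pos.ne']
  push_cast at h ⊢
  linarith

end Stirling

namespace Real

theorem mul_log_div_le_sub {a b : ℝ} (ha : 0 < a) (hb : 0 < b) :
    a * log (b / a) ≤ b - a := by
  have := mul_le_mul_of_nonneg_left (log_le_sub_one_of_pos (div_pos hb ha)) ha.le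
  rwa [mul_sub, mul_div_cancel₀ _ ha.ne', mul_one] at this

theorem log_Gamma_le_of_mem_Icc {s t : ℝ} (hs : 0 < s) (ht : t ∈ Icc s (s + 1)) :
    log (Gamma t) ≤ log (Gamma (s + 1)) - (s + 1 - t) * log s := by
  have hconv := convexOn_log_Gamma.2 (mem_Ioi.2 hs) (mem_Ioi.2 (by linarith : 0 < s + 1))
    (by linarith [ht.2] : 0 ≤ s + 1 - t) (by linarith [ht.1] : 0 ≤ t - s) (by ring)
  have hpt : (s + 1 - t) * s + (t - s) * (s + 1) = t := by ring
  simp only [Function.comp_apply, smul_eq_mul] at hconv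
  rw [hpt] at hconv
  rw [Gamma_add_one hs.ne', log_mul hs.ne' (Gamma_pos_of_pos hs).ne'] at hconv ⊢
  linarith

theorem le_log_Gamma_of_mem_Icc {s t : ℝ} (hs : 0 < s) (ht : t ∈ Icc s (s + 1)) :
    log (Gamma (s + 1)) - (s + 1 - t) * log t ≤ log (Gamma t) := by
  have ht0 : 0 < t := hs.trans_le ht.1
  have hconv := convexOn_log_Gamma.2 (mem_Ioi.2 ht0) (mem_Ioi.2 (by linarith : 0 < t + 1))
    (by linarith [ht.1] : 0 ≤ t - s) (by linarith [ht.2] : 0 ≤ s + 1 - t) (by ring)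
  have hpt : (t - s) * t + (s + 1 - t) * (t + 1) = s + 1 := by ring
  simp only [Function.comp_apply, smul_eq_mul] at hconv
  rw [hpt, Gamma_add_one ht0.ne', log_mul ht0.ne' (Gamma_pos_of_pos ht0).ne'] at hconv
  linarith

section StirlingGamma

variable {x : ℝ} {m : ℕ}

theorem log_Gamma_add_one_lt_stirling (hx : 0 < x) (hxm : x ≤ m) (hmx : m < x + 1) :
    log (Gamma (x + 1)) < log (2 * π * (x + 1)) / 2 + x * log x - x + 1 / 12 := by
  have hm : (0 : ℝ) < m := hx.trans_le hxm
  have hm1 : (1 : ℝ) ≤ m := Nat.one_le_cast.2 (Nat.cast_pos.1 hm)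
  have hΓ := log_Gamma_le_of_mem_Icc hm (t := x + 1) ⟨hmx.le, by linarith⟩
  rw [Gamma_nat_eq_factorial] at hΓ
  have hfac := Stirling.log_factorial_le_stirling (Nat.cast_pos.1 hm).ne'
  have h12 : 1 / (12 * (m : ℝ)) ≤ 1 / 12 := by gcongr; linarith
  have hlog := mul_log_div_le_sub hx hm
  rw [log_div hm.ne' hx.ne'] at hlog
  have hlt : log m < log (x + 1) := log_lt_log hm hmx
  rw [log_mul (by positivity) (by linarith)]
  linarith

theorem stirling_sub_one_lt_log_Gamma_add_one (hx : 0 < x) (hxm : x ≤ m) (hmx : m < x + 1) :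
    log (2 * π * (x + 1)) / 2 + x * log x - x - 1 < log (Gamma (x + 1)) := by
  have hm : (0 : ℝ) < m := hx.trans_le hxm
  have hm1 : (1 : ℝ) ≤ m := Nat.one_le_cast.2 (Nat.cast_pos.1 hm)
  have hΓ := le_log_Gamma_of_mem_Icc hm (t := x + 1) ⟨hmx.le, by linarith⟩
  rw [Gamma_nat_eq_factorial] at hΓ
  have hfac := Stirling.le_log_factorial_stirling (Nat.cast_pos.1 hm).ne'
  have ha := mul_log_div_le_sub hm hx
  have hb := mul_log_div_le_sub hm (by linarith : 0 < x + 1)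
  rw [log_div hx.ne' hm.ne'] at ha
  rw [log_div (by linarith) hm.ne'] at hb
  have key : (m - x + 1 / 2) * (log (x + 1) - log m) < x * (log m - log x) + 1 - (m - x) := by
    -- `ha` and `hb` bound `m` times the difference of the two sides below by `(x + m - 1) / 2`.
    have hpos : 0 < m * (x * (log m - log x) + 1 - (m - x)
        - (m - x + 1 / 2) * (log (x + 1) - log m)) := by
      nlinarith [mul_le_mul_of_nonneg_left ha hx.le,
        mul_le_mul_of_nonneg_left hb (by linarith : (0 : ℝ) ≤ m - x + 1 / 2)]
    nlinarith [pos_of_mul_pos_right hpos hm.le]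
  rw [log_mul (by positivity) (by linarith)]
  linarith

end StirlingGamma

end Real

/-- For every real `x > 0`,
`√(2π(x+1))/e · (x/e)^x < Γ(x+1) < √(2π(x+1)) · (x/e)^x · e^{1/12}`. -/
theorem statement17 (x : ℝ) (hx : 0 < x) :
    Real.sqrt (2 * Real.pi * (x + 1)) / Real.exp 1 * (x / Real.exp 1) ^ x
        < Real.Gamma (x + 1) ∧
      Real.Gamma (x + 1)
        < Real.sqrt (2 * Real.pi * (x + 1)) * (x / Real.exp 1) ^ x * Real.exp (1 / 12) := by
  have hxm : x ≤ ⌈x⌉₊ := Nat.le_ceil x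
  have hmx : (⌈x⌉₊ : ℝ) < x + 1 := Nat.ceil_lt_add_one hx.le
  have hΓ : 0 < Gamma (x + 1) := Gamma_pos_of_pos (by linarith)
  have hlog : log (√(2 * π * (x + 1)) * (x / exp 1) ^ x)
      = log (2 * π * (x + 1)) / 2 + x * log x - x := by
    rw [log_mul (by positivity) (by positivity), log_sqrt (by positivity),
      log_rpow (by positivity), log_div hx.ne' (exp_pos 1).ne', log_exp]
    ring
  constructor
  · rw [div_mul_eq_mul_div, div_lt_iff₀ (exp_pos 1), ← log_lt_log_iff (by positivity)
      (by positivity), log_mul hΓ.ne' (exp_pos 1).ne', log_exp, hlog]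
    linarith [stirling_sub_one_lt_log_Gamma_add_one hx hxm hmx]
  · rw [← log_lt_log_iff hΓ (by positivity), log_mul (by positivity) (exp_pos _).ne', log_exp,
      hlog]
    exact log_Gamma_add_one_lt_stirling hx hxm hmx
end

section
/- Let d ≥ 1 be an integer and p ≥ 1 a real number, and let vol(B) denote the Lebesgue measure of the unit ball B = {x ∈ ℝ^d : (Σ_{i=1}^d |x_i|^p)^{1/p} ≤ 1} of the ℓ_p norm on ℝ^d, so that vol(B) = (2Γ(1/p + 1))^d / Γ(d/p + 1). Then e^{−1}·√(2π(d/p + 1))·(1/(4 e^{1/12} √π))^d · d^{d/p} < vol(B)^{−1} < e^{1/12}·√(2π(d/p + 1))·(e/(2√(2π)))^d · d^{d/p}. -/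
/-!
With `s = d/p` and `t = 1/p ∈ (0, 1]` we have `vol⁻¹ = Γ(s+1) / (2Γ(t+1))^d`, and
`e^{-t} < Γ(t+1) ≤ 1` reduces both bounds to estimates of `Γ(s+1)` for `0 < s ≤ d`.
For the upper one, `log Γ(s+1) + s - log (s+1) / 2 - s log d` is convex in `s`, so it is bounded
by its values at `s = 0` and `s = d`, where Stirling's bound `n! ≤ e √n (n/e)^n` applies.
For the lower one, log-convexity of `Γ` bounds `Γ(s+1)` below by `m! / (m+1)^(m-s)` with
`m = ⌈s⌉`, and the lower Stirling bound for `m!` finishes.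
-/

open Real Set
open scoped Nat

namespace Real

lemma Gamma_add_one_le_one {t : ℝ} (h0 : 0 ≤ t) (h1 : t ≤ 1) : Gamma (t + 1) ≤ 1 := by
  simpa [Gamma_two] using convexOn_Gamma.le_max_of_mem_Icc (x := 1) (y := 2)
    (by norm_num) (by norm_num) ⟨by linarith, by linarith⟩

lemma inv_add_one_le_Gamma_add_one {t : ℝ} (ht : 0 ≤ t) : (t + 1)⁻¹ ≤ Gamma (t + 1) := by
  have h2 : 1 ≤ Gamma (t + 1 + 1) := by
    simpa [Gamma_two, show (1 : ℝ) + 1 = 2 by norm_num] using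
      Gamma_strictMonoOn_Ici.monotoneOn (a := 2) (b := t + 1 + 1) self_mem_Ici
        (mem_Ici.2 (by linarith)) (by linarith)
  rw [Gamma_add_one (by positivity)] at h2
  rwa [inv_le_iff_one_le_mul₀ (by positivity), mul_comm]

lemma exp_neg_lt_Gamma_add_one {t : ℝ} (ht : 0 < t) : exp (-t) < Gamma (t + 1) :=
  calc exp (-t) = (exp t)⁻¹ := exp_neg t
    _ < (t + 1)⁻¹ := inv_strictAnti₀ (by positivity) (add_one_lt_exp ht.ne')
    _ ≤ Gamma (t + 1) := inv_add_one_le_Gamma_add_one ht.le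

lemma log_factorial_le {n : ℕ} (hn : n ≠ 0) : log n ! ≤ n * log n - n + log n / 2 + 1 := by
  have hseq : Stirling.stirlingSeq n ≤ exp 1 / √2 := by
    obtain ⟨m, rfl⟩ := Nat.exists_eq_succ_of_ne_zero hn
    simpa [Stirling.stirlingSeq_one] using Stirling.stirlingSeq'_antitone (Nat.zero_le m)
  have hbound : (n ! : ℝ) ≤ exp 1 * √n * (n / exp 1) ^ n := by
    rw [Stirling.stirlingSeq, div_le_iff₀ (by positivity)] at hseq
    refine hseq.trans_eq ?_
    rw [sqrt_mul' _ (by positivity : (0 : ℝ) ≤ n)]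
    field_simp
  calc log n ! ≤ log (exp 1 * √n * (n / exp 1) ^ n) := log_le_log (by positivity) hbound
    _ = n * log n - n + log n / 2 + 1 := by
      rw [log_mul (by positivity) (by positivity), log_mul (by positivity) (by positivity),
        log_exp, log_sqrt (by positivity), log_pow, log_div (by positivity) (by positivity),
        log_exp]
      ring

lemma convexOn_log_Gamma_add_one : ConvexOn ℝ (Ici 0) fun s => log (Gamma (s + 1)) :=
  (convexOn_log_Gamma.translate_left 1).subset (fun x (hx : 0 ≤ x) => show 0 < 1 + x by linarith)
    (convex_Ici 0)

lemma concaveOn_log_add_one : ConcaveOn ℝ (Ici 0) fun s => log (s + 1) :=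
  (strictConcaveOn_log_Ioi.concaveOn.translate_left 1).subset
    (fun x (hx : 0 ≤ x) => show 0 < 1 + x by linarith) (convex_Ici 0)

lemma log_factorial_sub_le_log_Gamma {m : ℕ} {s : ℝ} (hs : 0 < s) (hsm : s ≤ m) :
    log m ! - (m - s) * log (m + 1) ≤ log (Gamma (s + 1)) := by
  rcases hsm.eq_or_lt with rfl | hsm
  · simp [Gamma_nat_eq_factorial]
  have hslope := convexOn_log_Gamma.slope_mono_adjacent (x := s + 1) (y := m + 1) (z := m + 2)
    (mem_Ioi.2 (by linarith)) (mem_Ioi.2 (by linarith)) (by linarith) (by linarith)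
  have hsucc : Gamma ((m : ℝ) + 2) = (m + 1) * m ! := by
    rw [show (m : ℝ) + 2 = m + 1 + 1 by ring, Gamma_add_one (by positivity),
      Gamma_nat_eq_factorial]
  simp only [Function.comp, hsucc, Gamma_nat_eq_factorial,
    log_mul (by positivity : (m : ℝ) + 1 ≠ 0) (by positivity : (m ! : ℝ) ≠ 0)] at hslope
  rw [show (m : ℝ) + 2 - (m + 1) = 1 by ring, div_one, div_le_iff₀ (by linarith)] at hslope
  linarith

lemma log_Gamma_add_one_add_le {d : ℕ} (hd : d ≠ 0) {s : ℝ} (hs : 0 ≤ s) (hsd : s ≤ d) :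
    log (Gamma (s + 1)) + s ≤ 1 + log (s + 1) / 2 + s * log d := by
  have hF : ConvexOn ℝ (Ici 0)
      (fun s => log (Gamma (s + 1)) - (log (s + 1) / 2 + (log d - 1) * s)) :=
    convexOn_log_Gamma_add_one.sub <| (concaveOn_log_add_one.smul (c := 1 / 2) (by norm_num)).add
      (((log d - 1) • LinearMap.id : ℝ →ₗ[ℝ] ℝ).concaveOn (convex_Ici 0)) |>.congr
        fun x _ => by
          simp only [Pi.add_apply, LinearMap.smul_apply, LinearMap.id_apply, smul_eq_mul]
          ring
  have hmax := hF.le_max_of_mem_Icc (x := 0) (y := (d : ℝ)) self_mem_Ici (mem_Ici.2 d.cast_nonneg) ⟨hs, hsd⟩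
  have hright : log (Gamma (d + 1)) - (log (d + 1) / 2 + (log d - 1) * d) ≤ 1 := by
    have := log_factorial_le hd
    have : log d ≤ log (d + 1) := log_le_log (by positivity) (by linarith)
    rw [Gamma_nat_eq_factorial]
    linarith
  simp only [zero_add, Gamma_one, log_one, mul_zero, add_zero, zero_div, sub_zero] at hmax
  linarith [max_le (zero_le_one' ℝ) hright]

lemma mul_log_le_mul_log_add_sub {m d s : ℝ} (hm : 0 < m) (hmd : m ≤ d) (hsm : s ≤ m) :
    s * log d ≤ s * log m + (d - m) := by
  have hlog : log d - log m ≤ (d - m) / m := by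
    rw [← log_div (by linarith) hm.ne', sub_div, div_self hm.ne']
    exact log_le_sub_one_of_pos (div_pos (by linarith) hm)
  have hnn : 0 ≤ log d - log m := sub_nonneg.2 (log_le_log hm hmd)
  calc s * log d = s * log m + s * (log d - log m) := by ring
    _ ≤ s * log m + m * ((d - m) / m) := add_le_add_right (mul_le_mul hsm hlog hnn hm.le) _
    _ = s * log m + (d - m) := by field_simp

lemma lt_log_Gamma_add_one {d : ℕ} {s c : ℝ} (hc : 1 ≤ c) (hc' : 3 / 2 * log 2 < c) (hs : 0 < s)
    (hsd : s ≤ d) : log (2 * π * (s + 1)) / 2 + s * log d - d * c - 1 < log (Gamma (s + 1)) := by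
  set m := ⌈s⌉₊
  have hsm : s ≤ m := Nat.le_ceil s
  have hms : (m : ℝ) < s + 1 := Nat.ceil_lt_add_one hs.le
  have hm1 : (1 : ℝ) ≤ m := by exact_mod_cast Nat.one_le_iff_ne_zero.2 (Nat.ceil_pos.2 hs).ne'
  have hmd : (m : ℝ) ≤ d := by exact_mod_cast Nat.ceil_le.2 hsd
  have hreduce := mul_log_le_mul_log_add_sub (by linarith) hmd hsm
  have hstirling := Stirling.le_log_factorial_stirling (Nat.ceil_pos.2 hs).ne'
  have hconvex := log_factorial_sub_le_log_Gamma hs hsm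
  have hL0 : 0 ≤ log (m + 1) - log m := sub_nonneg.2 (log_le_log (by linarith) (by linarith))
  have hL2 : log (m + 1) - log m ≤ log 2 := by
    rw [sub_le_iff_le_add, ← log_mul two_ne_zero (by positivity)]
    exact log_le_log (by positivity) (by linarith)
  have hgap : (m - s) * (log (m + 1) - log m) ≤ log (m + 1) - log m :=
    mul_le_of_le_one_left hL0 (by linarith)
  have hsplit : log (2 * π * (s + 1)) = log (2 * π) + log (s + 1) :=
    log_mul (by positivity) (by positivity)
  have hs1 : log (s + 1) ≤ log (m + 1) := log_le_log (by positivity) (by linarith)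
  have hcm : c - 1 ≤ m * (c - 1) := le_mul_of_one_le_left (by linarith) hm1
  have hcd : m * c - m ≤ d * c - d := by nlinarith
  linarith

lemma Gamma_add_one_mul_exp_le {d : ℕ} (hd : d ≠ 0) {s : ℝ} (hs : 0 ≤ s) (hsd : s ≤ d) :
    Gamma (s + 1) * exp s ≤ exp 1 * √(s + 1) * (d : ℝ) ^ s := by
  have hd0 : (0 : ℝ) < d := by positivity
  rw [← log_le_log_iff (by positivity) (by positivity), log_mul (by positivity) (by positivity),
    log_mul (by positivity) (by positivity), log_mul (by positivity) (by positivity), log_exp,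
    log_exp, log_sqrt (by positivity), log_rpow hd0]
  linarith [log_Gamma_add_one_add_le hd hs hsd]

lemma lt_Gamma_add_one {d : ℕ} {s C : ℝ} (hC : exp 1 ≤ C) (hC' : 2 * √2 < C) (hs : 0 < s)
    (hsd : s ≤ d) :
    (exp 1)⁻¹ * √(2 * π * (s + 1)) * (1 / C) ^ d * (d : ℝ) ^ s < Gamma (s + 1) := by
  have hd0 : (0 : ℝ) < d := by linarith
  have hC0 : 0 < C := (exp_pos 1).trans_le hC
  have hc : 1 ≤ log C := by rwa [le_log_iff_exp_le hC0]
  have hc' : 3 / 2 * log 2 < log C := by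
    have : 3 / 2 * log 2 = log (2 * √2) := by
      rw [log_mul two_ne_zero (by positivity), log_sqrt zero_le_two]; ring
    rw [this]; exact log_lt_log (by positivity) hC'
  rw [← log_lt_log_iff (by positivity) (by positivity), log_mul (by positivity) (by positivity),
    log_mul (by positivity) (by positivity), log_mul (by positivity) (by positivity), log_inv,
    log_exp, log_sqrt (by positivity), log_pow, one_div, log_inv, log_rpow hd0]
  linarith [lt_log_Gamma_add_one hc hc' hs hsd]

lemma sqrt_two_mul_pi_le_exp_one : √(2 * π) ≤ exp 1 := by
  rw [sqrt_le_left (exp_pos 1).le]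
  nlinarith [exp_one_gt_d9, pi_lt_d2]

lemma exp_one_le_two_mul_exp_mul_sqrt_pi : exp 1 ≤ 2 * exp (1 / 12) * √π := by
  have hpi : 3 / 2 ≤ √π := le_sqrt_of_sq_le (by nlinarith [pi_gt_three])
  nlinarith [exp_one_lt_d9, one_le_exp (by norm_num : (0 : ℝ) ≤ 1 / 12)]

lemma two_mul_sqrt_two_lt_two_mul_exp_mul_sqrt_pi : 2 * √2 < 2 * exp (1 / 12) * √π := by
  have hpi : √2 < √π := sqrt_lt_sqrt zero_le_two (by linarith [pi_gt_three])
  nlinarith [one_le_exp (by norm_num : (0 : ℝ) ≤ 1 / 12), sqrt_nonneg 2]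

lemma exp_one_le_exp_mul_sqrt_mul_pow {d : ℕ} (hd : d ≠ 0) :
    exp 1 ≤ exp (1 / 12) * √(2 * π) * (exp 1 / √(2 * π)) ^ d := by
  have h1 : 1 ≤ exp 1 / √(2 * π) := (one_le_div (by positivity)).2 sqrt_two_mul_pi_le_exp_one
  calc exp 1 ≤ exp (1 / 12) * exp 1 :=
        le_mul_of_one_le_left (exp_pos 1).le (one_le_exp (by norm_num))
    _ = exp (1 / 12) * √(2 * π) * (exp 1 / √(2 * π)) := by field_simp
    _ ≤ exp (1 / 12) * √(2 * π) * (exp 1 / √(2 * π)) ^ d := by gcongr; exact le_self_pow₀ h1 hd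

lemma lt_Gamma_div_two_mul_Gamma_pow {d : ℕ} {s t : ℝ} (hs : 0 < s) (hsd : s ≤ d) (ht0 : 0 ≤ t)
    (ht1 : t ≤ 1) :
    (exp 1)⁻¹ * √(2 * π * (s + 1)) * (1 / (4 * exp (1 / 12) * √π)) ^ d * (d : ℝ) ^ s
      < Gamma (s + 1) / (2 * Gamma (t + 1)) ^ d := by
  have hball : (2 * Gamma (t + 1)) ^ d ≤ 2 ^ d :=
    pow_le_pow_left₀ (by positivity) (by linarith [Gamma_add_one_le_one ht0 ht1]) d
  calc _ = (exp 1)⁻¹ * √(2 * π * (s + 1)) * (1 / (2 * exp (1 / 12) * √π)) ^ d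
        * (d : ℝ) ^ s / 2 ^ d := by
        rw [show 1 / (4 * exp (1 / 12) * √π) = 1 / (2 * exp (1 / 12) * √π) / 2 by ring, div_pow]
        ring
    _ < Gamma (s + 1) / 2 ^ d := by
        gcongr
        exact lt_Gamma_add_one exp_one_le_two_mul_exp_mul_sqrt_pi
          two_mul_sqrt_two_lt_two_mul_exp_mul_sqrt_pi hs hsd
    _ ≤ _ := div_le_div_of_nonneg_left (by positivity) (by positivity) hball

lemma Gamma_div_two_mul_Gamma_pow_lt {d : ℕ} (hd : d ≠ 0) {s t : ℝ} (ht : 0 < t) (hst : s = d * t)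
    (hsd : s ≤ d) :
    Gamma (s + 1) / (2 * Gamma (t + 1)) ^ d
      < exp (1 / 12) * √(2 * π * (s + 1)) * (exp 1 / (2 * √(2 * π))) ^ d * (d : ℝ) ^ s := by
  have hs : 0 < s := hst ▸ by positivity
  have hball : 2 ^ d * exp (-s) < (2 * Gamma (t + 1)) ^ d := by
    rw [hst, ← mul_neg, exp_nat_mul, ← mul_pow]
    exact pow_lt_pow_left₀ (by gcongr; exact exp_neg_lt_Gamma_add_one ht) (by positivity) hd
  calc _ < Gamma (s + 1) / (2 ^ d * exp (-s)) :=
        div_lt_div_of_pos_left (by positivity) (by positivity) hball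
    _ = Gamma (s + 1) * exp s / 2 ^ d := by rw [exp_neg]; field_simp
    _ ≤ exp 1 * √(s + 1) * (d : ℝ) ^ s / 2 ^ d := by
        gcongr ?_ / _; exact Gamma_add_one_mul_exp_le hd hs.le hsd
    _ ≤ exp (1 / 12) * √(2 * π) * (exp 1 / √(2 * π)) ^ d * √(s + 1) * (d : ℝ) ^ s / 2 ^ d := by
        gcongr; exact exp_one_le_exp_mul_sqrt_mul_pow hd
    _ = _ := by
        rw [sqrt_mul (by positivity : (0 : ℝ) ≤ 2 * π),
          show exp 1 / (2 * √(2 * π)) = exp 1 / √(2 * π) / 2 by ring,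
          div_pow (exp 1 / √(2 * π)) 2 d]
        ring

end Real

/-- Let `d ≥ 1` be an integer, `p ≥ 1` a real, and `vol` the Lebesgue
measure of the unit ball of the `ℓ_p` norm on `ℝ^d`, so that
`vol = (2Γ(1/p + 1))^d / Γ(d/p + 1)`. Then
`e⁻¹·√(2π(d/p+1))·(1/(4e^{1/12}√π))^d·d^{d/p} < vol⁻¹
  < e^{1/12}·√(2π(d/p+1))·(e/(2√(2π)))^d·d^{d/p}`. -/
theorem statement19 (d : ℕ) (hd : 1 ≤ d) (p : ℝ) (hp : 1 ≤ p) (vol : ℝ)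
    (hvol : vol = (2 * Real.Gamma (1 / p + 1)) ^ d / Real.Gamma ((d : ℝ) / p + 1)) :
    (Real.exp 1)⁻¹ * Real.sqrt (2 * Real.pi * ((d : ℝ) / p + 1)) *
          (1 / (4 * Real.exp (1 / 12) * Real.sqrt Real.pi)) ^ d *
          (d : ℝ) ^ ((d : ℝ) / p)
        < vol⁻¹ ∧
      vol⁻¹
        < Real.exp (1 / 12) * Real.sqrt (2 * Real.pi * ((d : ℝ) / p + 1)) *
            (Real.exp 1 / (2 * Real.sqrt (2 * Real.pi))) ^ d *
            (d : ℝ) ^ ((d : ℝ) / p) := by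
  have hp0 : 0 < p := by linarith
  have hsd : (d : ℝ) / p ≤ d := div_le_self (Nat.cast_nonneg d) hp
  rw [hvol, inv_div]
  exact ⟨lt_Gamma_div_two_mul_Gamma_pow (by positivity) hsd (by positivity) ((div_le_one hp0).2 hp),
    Gamma_div_two_mul_Gamma_pow_lt (Nat.one_le_iff_ne_zero.1 hd) (by positivity) (by ring) hsd⟩
end
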